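/- arXiv:1512.01598 — 6 statements merged into one kernel-verified Lean document; each statement's English description precedes it below -/
import Mathlib

section
/- Let n and k be positive integers with k ≤ n. An n-tuple (a_1,…,a_n) of non-negative integers is the ordered degree sequence (deg(1),…,deg(n)), where deg(i) is the number of successors of vertex i, of some rooted forest on vertex set {1,…,n} with k components if and only if a_1 + a_2 + ⋯ + a_n = n − k. -/
open Finset

noncomputable section
open scoped Classical

/-- A rooted forest on vertex set `Fin n` with root set `S`, encoded by its
parent map `f`: roots are fixed points of `f`, and every vertex reaches a
root after iterating `f` at most `n` times (this forces acyclicity outside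
the roots).  Edges of the forest are the pairs `(f v, v)` for `v ∉ S`,
oriented away from the roots. -/
def IsRootedForest (n : ℕ) (S : Finset (Fin n)) (f : Fin n → Fin n) : Prop :=
  (∀ v ∈ S, f v = v) ∧ ∀ v : Fin n, ∃ k ≤ n, f^[k] v ∈ S

/-- The number of successors (children) of the vertex `i` in the rooted
forest encoded by `f` with root set `S`. -/
def forestDeg (n : ℕ) (S : Finset (Fin n)) (f : Fin n → Fin n) (i : Fin n) : ℕ :=
  (Finset.univ.filter fun v => v ∉ S ∧ f v = i).card

/-- Extension of a tuple by zero. -/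
private def ext0 (n : ℕ) (b : Fin n → ℕ) (i : ℕ) : ℕ :=
  if h : i < n then b ⟨i, h⟩ else 0

/-- Partial sums of the extended tuple. -/
private def psumT (n : ℕ) (b : Fin n → ℕ) (j : ℕ) : ℕ :=
  ∑ i ∈ Finset.range j, ext0 n b i

private lemma exists_forest (n k : ℕ) (hk : 1 ≤ k) (hkn : k ≤ n) (b : Fin n → ℕ)
    (hanti : Antitone b) (hsum : ∑ i, b i = n - k) :
    ∃ S : Finset (Fin n), S.card = k ∧
      ∃ f : Fin n → Fin n, IsRootedForest n S f ∧ ∀ i, forestDeg n S f i = b i := by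
  have hTmono : Monotone (psumT n b) := fun i j hij =>
    Finset.sum_le_sum_of_subset (Finset.range_subset_range.2 hij)
  have hTn : psumT n b n = n - k := by
    rw [← hsum]
    unfold psumT
    rw [← Fin.sum_univ_eq_sum_range (ext0 n b) n]
    exact Finset.sum_congr rfl fun i _ => by simp [ext0, i.isLt]
  have hTsucc : ∀ j, psumT n b (j + 1) = psumT n b j + ext0 n b j := fun j =>
    Finset.sum_range_succ _ j
  have hext_anti : ∀ i j : ℕ, i ≤ j → ext0 n b j ≤ ext0 n b i := by
    intro i j hij
    by_cases hj : j < n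
    · have hi : i < n := lt_of_le_of_lt hij hj
      simp only [ext0, dif_pos hj, dif_pos hi]
      exact hanti (Fin.mk_le_mk.2 hij)
    · simp [ext0, hj]
  have hex : ∀ q : Fin n, ∃ j, (q : ℕ) < k + psumT n b (j + 1) := by
    intro q
    refine ⟨n, ?_⟩
    have h1 : psumT n b n ≤ psumT n b (n + 1) := hTmono (Nat.le_succ n)
    have h2 := q.isLt
    omega
  set pid : Fin n → ℕ := fun q => Nat.find (hex q) with hpid
  have hlt : ∀ q : Fin n, (q : ℕ) < k + psumT n b (pid q + 1) := fun q => Nat.find_spec (hex q)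
  have hge : ∀ q : Fin n, k ≤ (q : ℕ) → k + psumT n b (pid q) ≤ (q : ℕ) := by
    intro q hq
    rcases Nat.eq_zero_or_pos (pid q) with h0 | hpos
    · rw [h0]
      simpa [psumT] using hq
    · obtain ⟨m, hm⟩ := Nat.exists_eq_succ_of_ne_zero hpos.ne'
      have hm' : Nat.find (hex q) = m + 1 := hm
      have hmin : ¬ ((q : ℕ) < k + psumT n b (m + 1)) := Nat.find_min (hex q) (by omega)
      have hgoal : pid q = m + 1 := hm
      rw [hgoal]
      omega
  have hbpos : ∀ q : Fin n, k ≤ (q : ℕ) → 1 ≤ ext0 n b (pid q) := by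
    intro q hq
    have h1 := hlt q
    have h2 := hge q hq
    have h3 := hTsucc (pid q)
    omega
  have hTp : ∀ q : Fin n, k ≤ (q : ℕ) → pid q ≤ psumT n b (pid q) := by
    intro q hq
    have h1 := hbpos q hq
    calc pid q = ∑ _i ∈ Finset.range (pid q), 1 := by simp
    _ ≤ psumT n b (pid q) :=
      Finset.sum_le_sum fun i hi => h1.trans (hext_anti i _ (Finset.mem_range.1 hi).le)
  have hplt : ∀ q : Fin n, k ≤ (q : ℕ) → pid q < (q : ℕ) := by
    intro q hq
    have h1 := hge q hq
    have h2 := hTp q hq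
    omega
  set S : Finset (Fin n) := Finset.univ.filter (fun v : Fin n => (v : ℕ) < k) with hS
  set f : Fin n → Fin n := fun v =>
    if h : (v : ℕ) < k then v else ⟨pid v, (hplt v (le_of_not_gt h)).trans v.isLt⟩ with hf
  have hmemS : ∀ v : Fin n, v ∈ S ↔ (v : ℕ) < k := by intro v; simp [hS]
  have hfval : ∀ v : Fin n, k ≤ (v : ℕ) → ((f v : ℕ)) = pid v := by
    intro v hv
    simp only [hf]
    rw [dif_neg (not_lt.2 hv)]
  refine ⟨S, ?_, f, ⟨?_, ?_⟩, ?_⟩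
  · apply Finset.card_eq_of_bijective (fun i hi => (⟨i, lt_of_lt_of_le hi hkn⟩ : Fin n))
    · intro v hv
      rw [hmemS] at hv
      exact ⟨v, hv, Fin.ext rfl⟩
    · intro i hi
      rw [hmemS]
      exact hi
    · intro i j hi hj hij
      simpa using hij
  · intro v hv
    rw [hmemS] at hv
    simp only [hf]
    rw [dif_pos hv]
  · have key : ∀ m, ∀ v : Fin n, (v : ℕ) < m → ∃ l, l ≤ (v : ℕ) ∧ f^[l] v ∈ S := by
      intro m
      induction m with
      | zero => intro v hv; omega
      | succ m ih =>
        intro v hv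
        by_cases hvk : (v : ℕ) < k
        · exact ⟨0, Nat.zero_le _, by simpa [hmemS] using hvk⟩
        · have hk' : k ≤ (v : ℕ) := le_of_not_gt hvk
          have hlt' : ((f v : ℕ)) < m := by
            have h1 := hplt v hk'
            rw [hfval v hk']
            omega
          obtain ⟨l, hl1, hl2⟩ := ih (f v) hlt'
          refine ⟨l + 1, ?_, ?_⟩
          · have h1 := hfval v hk'
            have h2 := hplt v hk'
            omega
          · rw [Function.iterate_succ_apply]
            exact hl2
    intro v
    obtain ⟨l, hl1, hl2⟩ := key n v v.isLt
    exact ⟨l, le_trans hl1 (le_of_lt v.isLt), hl2⟩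
  · intro i
    have hbound : k + psumT n b ((i : ℕ) + 1) ≤ n := by
      have h1 : psumT n b ((i : ℕ) + 1) ≤ psumT n b n := hTmono i.isLt
      omega
    have hA : ∀ q : Fin n, (¬(q : ℕ) < k ∧ f q = i) ↔
        (k + psumT n b (i : ℕ) ≤ (q : ℕ) ∧ (q : ℕ) < k + psumT n b ((i : ℕ) + 1)) := by
      intro q
      constructor
      · rintro ⟨hqk, hfq⟩
        have hk' : k ≤ (q : ℕ) := le_of_not_gt hqk
        have hp : pid q = (i : ℕ) := by rw [← hfval q hk', hfq]
        exact ⟨hp ▸ hge q hk', hp ▸ hlt q⟩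
      · rintro ⟨h1, h2⟩
        have hk' : k ≤ (q : ℕ) := le_trans (Nat.le_add_right k _) h1
        have hqk : ¬ (q : ℕ) < k := not_lt.2 hk'
        have hp : pid q = (i : ℕ) := by
          rcases lt_trichotomy (pid q) (i : ℕ) with h | h | h
          · exfalso
            have h3 := hlt q
            have hmm : psumT n b (pid q + 1) ≤ psumT n b (i : ℕ) := hTmono h
            omega
          · exact h
          · exfalso
            have h3 := hge q hk'
            have hmm : psumT n b ((i : ℕ) + 1) ≤ psumT n b (pid q) := hTmono h
            omega
        refine ⟨hqk, ?_⟩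
        apply Fin.ext
        rw [hfval q hk', hp]
    rw [forestDeg]
    have hset : (Finset.univ.filter fun v => v ∉ S ∧ f v = i) =
        Finset.univ.filter (fun v : Fin n =>
          k + psumT n b (i : ℕ) ≤ (v : ℕ) ∧ (v : ℕ) < k + psumT n b ((i : ℕ) + 1)) := by
      ext v
      simp only [Finset.mem_filter, Finset.mem_univ, true_and, hmemS]
      exact hA v
    rw [hset]
    have hattach : (Finset.univ.filter (fun v : Fin n =>
          k + psumT n b (i : ℕ) ≤ (v : ℕ) ∧ (v : ℕ) < k + psumT n b ((i : ℕ) + 1))) =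
        Finset.attachFin (Finset.Ico (k + psumT n b (i : ℕ)) (k + psumT n b ((i : ℕ) + 1)))
          (fun m hm => lt_of_lt_of_le (Finset.mem_Ico.1 hm).2 hbound) := by
      ext v
      simp [Finset.mem_attachFin, Finset.mem_Ico]
    rw [hattach, Finset.card_attachFin, Nat.card_Ico, hTsucc]
    have : ext0 n b (i : ℕ) = b i := by simp [ext0, i.isLt]
    omega

private lemma forest_relabel (n k : ℕ) (a : Fin n → ℕ) (e : Equiv.Perm (Fin n))
    (h : ∃ S : Finset (Fin n), S.card = k ∧
        ∃ f : Fin n → Fin n, IsRootedForest n S f ∧ ∀ i, forestDeg n S f i = a (e i)) :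
    ∃ S : Finset (Fin n), S.card = k ∧
      ∃ f : Fin n → Fin n, IsRootedForest n S f ∧ ∀ i, forestDeg n S f i = a i := by
  obtain ⟨S, hScard, f, ⟨hroot, hreach⟩, hdeg⟩ := h
  refine ⟨S.image e, by rw [Finset.card_image_of_injective _ e.injective, hScard],
    fun v => e (f (e.symm v)), ⟨?_, ?_⟩, ?_⟩
  · intro v hv
    obtain ⟨w, hw, rfl⟩ := Finset.mem_image.1 hv
    simp [hroot w hw]
  · intro v
    obtain ⟨m, hm, hm2⟩ := hreach (e.symm v)
    have hconj : ∀ l (u : Fin n), (fun v => e (f (e.symm v)))^[l] u = e (f^[l] (e.symm u)) := by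
      intro l
      induction l with
      | zero => intro u; simp
      | succ l ih =>
        intro u
        rw [Function.iterate_succ_apply', ih, Function.iterate_succ_apply']
        simp
    refine ⟨m, hm, ?_⟩
    rw [hconj]
    exact Finset.mem_image_of_mem e hm2
  · intro i
    have h1 := hdeg (e.symm i)
    rw [Equiv.apply_symm_apply] at h1
    rw [← h1]
    unfold forestDeg
    have hset : (Finset.univ.filter fun v => v ∉ S.image e ∧ e (f (e.symm v)) = i)
        = (Finset.univ.filter fun w => w ∉ S ∧ f w = e.symm i).image e := by
      ext v
      simp only [Finset.mem_filter, Finset.mem_univ, true_and, Finset.mem_image]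
      constructor
      · rintro ⟨h1, h2⟩
        refine ⟨e.symm v, ⟨?_, ?_⟩, by simp⟩
        · intro hc
          exact h1 ⟨e.symm v, hc, by simp⟩
        · rw [← h2]
          simp
      · rintro ⟨w, ⟨hw1, hw2⟩, rfl⟩
        refine ⟨?_, ?_⟩
        · rintro ⟨u, hu, huv⟩
          exact hw1 (by rwa [e.injective huv] at hu)
        · simp [hw2]
    rw [hset, Finset.card_image_of_injective _ e.injective]

private lemma exists_antitone_perm (n : ℕ) (a : Fin n → ℕ) :
    ∃ e : Equiv.Perm (Fin n), Antitone (fun i => a (e i)) := by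
  refine ⟨(Fin.revPerm).trans (Tuple.sort a), ?_⟩
  intro i j hij
  exact Tuple.monotone_sort a (Fin.rev_le_rev.2 hij)

/-- an `n`-tuple of non-negative integers is the ordered degree
sequence of some rooted forest on `{1,…,n}` with `k` components iff its
entries sum to `n - k`. -/
theorem degree_sequence_iff_sum (n k : ℕ) (hk : 1 ≤ k) (hkn : k ≤ n) (a : Fin n → ℕ) :
    (∃ S : Finset (Fin n), S.card = k ∧
        ∃ f : Fin n → Fin n, IsRootedForest n S f ∧ ∀ i, forestDeg n S f i = a i) ↔
      ∑ i, a i = n - k := by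
  constructor
  · rintro ⟨S, hScard, f, _hforest, hdeg⟩
    have h1 : ∑ i, forestDeg n S f i = (Finset.univ.filter fun v : Fin n => v ∉ S).card := by
      rw [Finset.card_eq_sum_card_fiberwise (f := f) (t := Finset.univ)
        (fun v _ => Finset.mem_univ (f v))]
      apply Finset.sum_congr rfl
      intro i _
      unfold forestDeg
      congr 1
      rw [Finset.filter_filter]
    have h2 : (Finset.univ.filter fun v : Fin n => v ∉ S).card = n - k := by
      have hc : (Finset.univ.filter fun v : Fin n => v ∉ S) = Sᶜ := by
        ext v
        simp
      rw [hc, Finset.card_compl, Fintype.card_fin, hScard]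
    calc ∑ i, a i = ∑ i, forestDeg n S f i :=
          Finset.sum_congr rfl fun i _ => (hdeg i).symm
      _ = n - k := by rw [h1, h2]
  · intro hsum
    obtain ⟨e, he⟩ := exists_antitone_perm n a
    apply forest_relabel n k a e
    apply exists_forest n k hk hkn (fun i => a (e i)) he
    rw [← hsum]
    exact Equiv.sum_comp e a
end
end

section
/- Let S ⊆ {1,…,n} be nonempty and let T_{n,S} denote the set of rooted forests on vertex set {1,…,n} with exactly |S| components whose roots are exactly the vertices in S. Then the generating polynomial identity holds: ∑_{σ ∈ T_{n,S}} x_1^{deg_σ(1)} ⋯ x_n^{deg_σ(n)} = (x_1 + ⋯ + x_n)^{n−|S|−1} · (∑_{i∈S} x_i), where deg_σ(i) is the number of successors of vertex i in σ (assuming n > |S|, i.e., there is at least one non-root vertex). -/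
open Finset

noncomputable section
open scoped Classical

namespace ForestAux

/-! ### Generic lemmas on iteration -/

lemma iter_agree {α : Type*} (f g : α → α) (v : α) :
    ∀ k, (∀ j, j < k → g (f^[j] v) = f (f^[j] v)) → g^[k] v = f^[k] v := by
  intro k
  induction k with
  | zero => intro _; rfl
  | succ k ih =>
    intro h
    rw [Function.iterate_succ_apply', Function.iterate_succ_apply',
      ih (fun j hj => h j (hj.trans (Nat.lt_succ_self k))), h k (Nat.lt_succ_self k)]

lemma exists_min_hit {α : Type*} (f : α → α) (Q : α → Prop) (v : α) (h : ∃ k, Q (f^[k] v)) :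
    ∃ k, Q (f^[k] v) ∧ ∀ j, j < k → ¬ Q (f^[j] v) :=
  ⟨Nat.find h, Nat.find_spec h, fun _ hj => Nat.find_min h hj⟩

lemma exists_hit_le_card {α : Type*} [Fintype α] (f : α → α) (Q : α → Prop) (v : α)
    (h : ∃ k, Q (f^[k] v)) : ∃ k ≤ Fintype.card α, Q (f^[k] v) := by
  obtain ⟨k, hk, hmin⟩ := exists_min_hit f Q v h
  refine ⟨k, ?_, hk⟩
  by_contra hlt
  push_neg at hlt
  have key : ∀ i j : ℕ, i < j → j ≤ k → f^[i] v ≠ f^[j] v := by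
    intro i j hij hjk heq
    have h1 : f^[k - j + i] v = f^[k] v := by
      have h2 : f^[k - j] (f^[j] v) = f^[k] v := by
        rw [← Function.iterate_add_apply, Nat.sub_add_cancel hjk]
      rw [← h2, ← heq, ← Function.iterate_add_apply]
    exact hmin _ (by omega) (h1 ▸ hk)
  have hinj : Function.Injective (fun j : Fin (k + 1) => f^[(j : ℕ)] v) := by
    intro a b hab
    rcases lt_trichotomy (a : ℕ) (b : ℕ) with h' | h' | h'
    · exact absurd hab (key a b h' (Nat.lt_succ_iff.1 b.2))
    · exact Fin.ext h'
    · exact absurd hab.symm (key b a h' (Nat.lt_succ_iff.1 a.2))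
  have hle := Fintype.card_le_of_injective _ hinj
  simp only [Fintype.card_fin] at hle
  omega

variable {n : ℕ}

/-! ### Forests on a sub-vertex-set, encoded by globally defined maps -/

/-- A forest on vertex set `U` with root set `S`, encoded as a global map
fixing everything outside `U \ S`. -/
def Cond (U S : Finset (Fin n)) (f : Fin n → Fin n) : Prop :=
  (∀ v, v ∉ U \ S → f v = v) ∧ (∀ v ∈ U \ S, f v ∈ U) ∧ ∀ v ∈ U \ S, ∃ k, f^[k] v ∈ S

/-- The generating polynomial of such forests. -/
def P (U S : Finset (Fin n)) : MvPolynomial (Fin n) ℤ :=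
  ∑ f ∈ Finset.univ.filter (Cond U S), ∏ v ∈ U \ S, MvPolynomial.X (f v)

lemma cond_univ_iff (S : Finset (Fin n)) (f : Fin n → Fin n) :
    Cond (univ : Finset (Fin n)) S f ↔ IsRootedForest n S f := by
  constructor
  · rintro ⟨h1, h2, h3⟩
    refine ⟨fun v hv => h1 v (by simp [hv]), fun v => ?_⟩
    by_cases hv : v ∈ S
    · exact ⟨0, Nat.zero_le n, hv⟩
    · obtain ⟨k, hk, hQ⟩ := exists_hit_le_card f (fun w => w ∈ S) v (h3 v (by simp [hv]))
      exact ⟨k, by simpa using hk, hQ⟩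
  · rintro ⟨h1, h2⟩
    refine ⟨fun v hv => h1 v (by simpa using hv), fun v _ => mem_univ _, fun v _ => ?_⟩
    obtain ⟨k, _, hk⟩ := h2 v
    exact ⟨k, hk⟩

lemma weight_eq (S : Finset (Fin n)) (f : Fin n → Fin n) :
    ∏ i : Fin n, (MvPolynomial.X i : MvPolynomial (Fin n) ℤ) ^ forestDeg n S f i
      = ∏ v ∈ univ \ S, MvPolynomial.X (f v) := by
  rw [← Finset.prod_fiberwise' (univ \ S) f (fun j => (MvPolynomial.X j : MvPolynomial (Fin n) ℤ))]
  refine Finset.prod_congr rfl fun i _ => ?_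
  rw [Finset.prod_const]
  congr 1
  unfold forestDeg
  congr 1
  ext v
  simp [mem_sdiff]

lemma P_self (W : Finset (Fin n)) : P W W = 1 := by
  unfold P
  have h : Finset.univ.filter (Cond W W) = {fun v => v} := by
    ext f
    simp only [mem_filter, mem_univ, true_and, mem_singleton, Cond, sdiff_self,
      Finset.bot_eq_empty, notMem_empty, not_false_iff, true_implies]
    constructor
    · rintro ⟨h1, -, -⟩
      funext v
      exact h1 v
    · rintro rfl
      exact ⟨fun _ => rfl, fun v hv => hv.elim, fun v hv => hv.elim⟩
  rw [h, sum_singleton, sdiff_self]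
  simp

lemma P_empty (W : Finset (Fin n)) (hW : W.Nonempty) : P W ∅ = 0 := by
  unfold P
  have h : Finset.univ.filter (Cond W ∅) = ∅ := by
    ext f
    simp only [mem_filter, mem_univ, true_and, notMem_empty, iff_false]
    rintro ⟨-, -, h3⟩
    obtain ⟨v, hv⟩ := hW
    obtain ⟨k, hk⟩ := h3 v (by simpa using hv)
    exact absurd hk (notMem_empty _)
  rw [h, sum_empty]

lemma sum_X_ne_zero (T : Finset (Fin n)) (hT : T.Nonempty) :
    (∑ i ∈ T, (MvPolynomial.X i : MvPolynomial (Fin n) ℤ)) ≠ 0 := by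
  obtain ⟨i, hi⟩ := hT
  intro h
  have h2 := congrArg (MvPolynomial.eval (fun j => if j = i then (1 : ℤ) else 0)) h
  rw [map_sum] at h2
  simp only [MvPolynomial.eval_X, map_zero] at h2
  rw [Finset.sum_ite_eq' T i (fun _ => (1 : ℤ))] at h2
  simp [hi] at h2

/-! ### Peeling off the children of the roots -/

/-- the set of "layer maps": send each vertex of `A` somewhere in `S`, fix the rest. -/
def layerSet (S A : Finset (Fin n)) : Finset (Fin n → Fin n) :=
  Finset.univ.filter fun g => (∀ v ∈ A, g v ∈ S) ∧ ∀ v, v ∉ A → g v = v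

lemma sum_layer (S A : Finset (Fin n)) :
    ∑ g ∈ layerSet S A, ∏ v ∈ A, (MvPolynomial.X (g v) : MvPolynomial (Fin n) ℤ)
      = (∑ i ∈ S, MvPolynomial.X i) ^ A.card := by
  induction A using Finset.induction_on with
  | empty =>
    have h : layerSet S (∅ : Finset (Fin n)) = {fun v => v} := by
      ext g
      constructor
      · intro hg
        obtain ⟨-, h2⟩ := (mem_filter.1 hg).2
        exact mem_singleton.2 (funext fun v => h2 v (notMem_empty v))
      · intro hg
        rw [mem_singleton.1 hg]
        exact mem_filter.2 ⟨mem_univ _,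
          fun v hv => absurd hv (notMem_empty v), fun _ _ => rfl⟩
    simp [h]
  | @insert a A ha ih =>
    rw [card_insert_of_notMem ha, pow_succ']
    have key : ∑ g ∈ layerSet S (insert a A),
          ∏ v ∈ insert a A, (MvPolynomial.X (g v) : MvPolynomial (Fin n) ℤ)
        = ∑ p ∈ S ×ˢ layerSet S A,
            (MvPolynomial.X p.1 : MvPolynomial (Fin n) ℤ) * ∏ v ∈ A, MvPolynomial.X (p.2 v) := by
      refine Finset.sum_nbij' (fun g => (g a, Function.update g a a))
        (fun p => Function.update p.2 a p.1) ?_ ?_ ?_ ?_ ?_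
      · intro g hg
        simp only [layerSet, mem_filter, mem_univ, true_and] at hg
        obtain ⟨h1, h2⟩ := hg
        refine mem_product.2 ⟨h1 a (mem_insert_self a A), ?_⟩
        simp only [layerSet, mem_filter, mem_univ, true_and]
        constructor
        · intro v hv
          rw [Function.update_of_ne (ne_of_mem_of_not_mem hv ha)]
          exact h1 v (mem_insert_of_mem hv)
        · intro v hv
          by_cases hva : v = a
          · subst hva; rw [Function.update_self]
          · rw [Function.update_of_ne hva]
            exact h2 v (fun h => hv ((mem_insert.1 h).resolve_left hva))
      · intro p hp
        obtain ⟨hp1, hp2⟩ := mem_product.1 hp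
        simp only [layerSet, mem_filter, mem_univ, true_and] at hp2 ⊢
        constructor
        · intro v hv
          rcases mem_insert.1 hv with rfl | hv'
          · rw [Function.update_self]; exact hp1
          · rw [Function.update_of_ne (ne_of_mem_of_not_mem hv' ha)]
            exact hp2.1 v hv'
        · intro v hv
          have hva : v ≠ a := fun h => hv (h ▸ mem_insert_self a A)
          rw [Function.update_of_ne hva]
          exact hp2.2 v (fun h => hv (mem_insert_of_mem h))
      · intro g hg
        simp only
        rw [Function.update_idem, Function.update_eq_self]
      · intro p hp
        obtain ⟨hp1, hp2⟩ := mem_product.1 hp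
        simp only [layerSet, mem_filter, mem_univ, true_and] at hp2
        have hpa : p.2 a = a := hp2.2 a ha
        refine Prod.ext ?_ ?_
        · simp
        · funext w
          by_cases hw : w = a
          · subst hw
            simp [hpa]
          · simp [Function.update_of_ne hw]
      · intro g hg
        simp only [layerSet, mem_filter, mem_univ, true_and] at hg
        rw [prod_insert ha]
        congr 1
        refine Finset.prod_congr rfl fun v hv => ?_
        simp [Function.update_of_ne (ne_of_mem_of_not_mem hv ha)]
    rw [key, Finset.sum_product, ← ih, Finset.sum_mul]
    refine Finset.sum_congr rfl fun i _ => ?_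
    rw [Finset.mul_sum]

/-- Decomposition of the forest generating polynomial by the set `A` of
children of the roots. -/
lemma P_decomp (U S : Finset (Fin n)) (hSU : S ⊆ U) :
    P U S = ∑ A ∈ (U \ S).powerset,
      (∑ i ∈ S, (MvPolynomial.X i : MvPolynomial (Fin n) ℤ)) ^ A.card * P (U \ S) A := by
  classical
  unfold P
  rw [← Finset.sum_fiberwise_of_maps_to
    (g := fun f => (U \ S).filter fun v => f v ∈ S)
    (t := (U \ S).powerset)
    (fun f _ => mem_powerset.2 (filter_subset _ _))]
  refine Finset.sum_congr rfl fun A hA => ?_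
  have hA' : A ⊆ U \ S := mem_powerset.1 hA
  have hprod : (∑ i ∈ S, (MvPolynomial.X i : MvPolynomial (Fin n) ℤ)) ^ A.card
        * ∑ f ∈ Finset.univ.filter (Cond (U \ S) A), ∏ v ∈ (U \ S) \ A, MvPolynomial.X (f v)
      = ∑ p ∈ layerSet S A ×ˢ Finset.univ.filter (Cond (U \ S) A),
          (∏ v ∈ A, (MvPolynomial.X (p.1 v) : MvPolynomial (Fin n) ℤ))
            * ∏ v ∈ (U \ S) \ A, MvPolynomial.X (p.2 v) := by
    rw [← sum_layer S A, Finset.sum_mul_sum, Finset.sum_product]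
  rw [hprod]
  refine Finset.sum_nbij'
    (fun f => ((fun v => if v ∈ A then f v else v), (fun v => if v ∈ A then v else f v)))
    (fun p => fun v => if v ∈ A then p.1 v else p.2 v) ?_ ?_ ?_ ?_ ?_
  · -- forward membership
    intro f hf
    obtain ⟨hf1, hfib⟩ := mem_filter.1 hf
    have hc : Cond U S f := (mem_filter.1 hf1).2
    have hfibm : ∀ v, v ∈ A ↔ v ∈ U \ S ∧ f v ∈ S := by
      intro v
      rw [← hfib, mem_filter]
    refine mem_product.2 ⟨?_, ?_⟩
    · simp only [layerSet, mem_filter, mem_univ, true_and]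
      exact ⟨fun v hv => by simp only [if_pos hv]; exact ((hfibm v).1 hv).2,
        fun v hv => by simp only [if_neg hv]⟩
    · simp only [mem_filter, mem_univ, true_and]
      refine ⟨?_, ?_, ?_⟩
      · intro v hv
        by_cases hvA : v ∈ A
        · simp only [if_pos hvA]
        · simp only [if_neg hvA]
          exact hc.1 v (fun hvus => hv (mem_sdiff.2 ⟨hvus, hvA⟩))
      · intro v hv
        obtain ⟨hv1, hv2⟩ := mem_sdiff.1 hv
        simp only [if_neg hv2]
        refine mem_sdiff.2 ⟨hc.2.1 v hv1, fun hfs => hv2 ((hfibm v).2 ⟨hv1, hfs⟩)⟩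
      · intro v hv
        obtain ⟨hv1, hv2⟩ := mem_sdiff.1 hv
        obtain ⟨k, hk, hmin⟩ := exists_min_hit f (fun w => w ∈ S) v (hc.2.2 v hv1)
        have hk0 : k ≠ 0 := by
          intro h
          subst h
          exact (mem_sdiff.1 hv1).2 hk
        have htraj : ∀ j, j < k → f^[j] v ∈ U \ S := by
          intro j
          induction j with
          | zero => intro _; exact hv1
          | succ j ihj =>
            intro hj
            have hjlt : j < k := Nat.lt_of_succ_lt hj
            rw [Function.iterate_succ_apply']
            refine mem_sdiff.2 ⟨hc.2.1 _ (ihj hjlt), ?_⟩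
            have hh := hmin (j + 1) hj
            rwa [Function.iterate_succ_apply'] at hh
        have hlast : f^[k - 1] v ∈ A := by
          refine (hfibm _).2 ⟨htraj _ (Nat.sub_lt (Nat.pos_of_ne_zero hk0) one_pos), ?_⟩
          have : f (f^[k - 1] v) = f^[k] v := by
            conv_rhs => rw [show k = (k - 1) + 1 from (Nat.succ_pred_eq_of_pos
              (Nat.pos_of_ne_zero hk0)).symm, Function.iterate_succ_apply']
          rw [this]
          exact hk
        refine ⟨k - 1, ?_⟩
        have hag : (fun w => if w ∈ A then w else f w)^[k - 1] v = f^[k - 1] v := by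
          refine iter_agree f _ v (k - 1) fun j hj => ?_
          have hnA : f^[j] v ∉ A := by
            intro hA2
            have hfs : f^[j + 1] v ∈ S := by
              rw [Function.iterate_succ_apply']
              exact ((hfibm _).1 hA2).2
            exact hmin (j + 1) (by omega) hfs
          rw [if_neg hnA]
        rw [hag]
        exact hlast
  · -- backward membership
    intro p hp
    obtain ⟨hp1, hp2⟩ := mem_product.1 hp
    simp only [layerSet, mem_filter, mem_univ, true_and] at hp1
    have hc' : Cond (U \ S) A p.2 := (mem_filter.1 hp2).2
    have hAUS : A ⊆ U \ S := hA'
    refine mem_filter.2 ⟨mem_filter.2 ⟨mem_univ _, ?_, ?_, ?_⟩, ?_⟩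
    · intro v hv
      have hvA : v ∉ A := fun h => hv (hAUS h)
      simp only [if_neg hvA]
      exact hc'.1 v (fun h => hv (mem_sdiff.1 h).1)
    · intro v hv
      by_cases hvA : v ∈ A
      · simp only [if_pos hvA]
        exact hSU (hp1.1 v hvA)
      · simp only [if_neg hvA]
        exact (mem_sdiff.1 (hc'.2.1 v (mem_sdiff.2 ⟨hv, hvA⟩))).1
    · intro v hv
      by_cases hvA : v ∈ A
      · refine ⟨1, ?_⟩
        simp only [Function.iterate_one, if_pos hvA]
        exact hp1.1 v hvA
      · obtain ⟨k, hk, hmin⟩ := exists_min_hit p.2 (fun w => w ∈ A) v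
          (hc'.2.2 v (mem_sdiff.2 ⟨hv, hvA⟩))
        have htraj : ∀ j, j < k → p.2^[j] v ∈ (U \ S) \ A := by
          intro j
          induction j with
          | zero => intro _; exact mem_sdiff.2 ⟨hv, hvA⟩
          | succ j ihj =>
            intro hj
            have hjlt : j < k := Nat.lt_of_succ_lt hj
            rw [Function.iterate_succ_apply']
            refine mem_sdiff.2 ⟨hc'.2.1 _ (ihj hjlt), ?_⟩
            have hh := hmin (j + 1) hj
            rwa [Function.iterate_succ_apply'] at hh
        have hag : (fun v => if v ∈ A then p.1 v else p.2 v)^[k] v = p.2^[k] v := by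
          refine iter_agree p.2 _ v k fun j hj => ?_
          rw [if_neg (mem_sdiff.1 (htraj j hj)).2]
        refine ⟨k + 1, ?_⟩
        rw [Function.iterate_succ_apply', hag]
        simp only [if_pos hk]
        exact hp1.1 _ hk
    · -- fiber condition
      ext v
      simp only [mem_filter]
      constructor
      · rintro ⟨hv1, hv2⟩
        by_contra hvA
        rw [if_neg hvA] at hv2
        exact (mem_sdiff.1 (hc'.2.1 v (mem_sdiff.2 ⟨hv1, hvA⟩))).2 hv2
      · intro hvA
        refine ⟨hAUS hvA, ?_⟩
        rw [if_pos hvA]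
        exact hp1.1 v hvA
  · -- left inverse
    intro f hf
    funext v
    by_cases hvA : v ∈ A <;> simp [hvA]
  · -- right inverse
    intro p hp
    obtain ⟨hp1, hp2⟩ := mem_product.1 hp
    simp only [layerSet, mem_filter, mem_univ, true_and] at hp1
    have hc' : Cond (U \ S) A p.2 := (mem_filter.1 hp2).2
    refine Prod.ext ?_ ?_
    · funext v
      by_cases hvA : v ∈ A
      · simp only [if_pos hvA]
      · simp only [if_neg hvA]
        exact (hp1.2 v hvA).symm
    · funext v
      by_cases hvA : v ∈ A
      · simp only [if_pos hvA]
        exact (hc'.1 v (fun h => (mem_sdiff.1 h).2 hvA)).symm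
      · simp only [if_neg hvA]
  · -- weights
    intro f hf
    rw [← Finset.prod_sdiff hA', mul_comm]
    congr 1
    · refine Finset.prod_congr rfl fun v hv => ?_
      simp only [if_pos hv]
    · refine Finset.prod_congr rfl fun v hv => ?_
      simp only [if_neg (mem_sdiff.1 hv).2]

/-! ### The algebraic induction step -/

lemma binom {R : Type*} [CommRing R] {α : Type*} (s : Finset α) (y z : R) :
    ∑ B ∈ s.powerset, y ^ B.card * z ^ (s.card - B.card) = (y + z) ^ s.card := by
  classical
  rw [← Finset.prod_const (y + z), Finset.prod_add]
  refine Finset.sum_congr rfl fun B hB => ?_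
  rw [Finset.prod_const, Finset.prod_const, card_sdiff_of_subset (mem_powerset.1 hB)]

/-- The purely algebraic step of the induction. -/
lemma alg_step {α : Type*} {R : Type*} [CommRing R] (T : Finset α) (x : α → R)
    (y : R) (m : ℕ) (hm : T.card = m)
    (F : Finset α → R) (hFT : F T = 1) (hFe : F ∅ = 0)
    (hF : ∀ A ⊆ T, A.Nonempty → A ≠ T →
      F A = (∑ i ∈ T, x i) ^ (m - A.card - 1) * ∑ i ∈ A, x i) :
    (∑ i ∈ T, x i) * ∑ A ∈ T.powerset, y ^ A.card * F A
      = (∑ i ∈ T, x i) * ((y + ∑ i ∈ T, x i) ^ (m - 1) * y) := by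
  classical
  set Z := ∑ i ∈ T, x i with hZ
  rw [Finset.mul_sum]
  have key : ∀ A ∈ T.powerset,
      Z * (y ^ A.card * F A) = y ^ A.card * Z ^ (m - A.card) * ∑ i ∈ A, x i := by
    intro A hA
    have hAsub : A ⊆ T := mem_powerset.1 hA
    by_cases hAT : A = T
    · subst hAT
      rw [hFT, mul_one, hm, Nat.sub_self, pow_zero, ← hZ]
      ring
    · rcases A.eq_empty_or_nonempty with rfl | hAne
      · simp [hFe]
      · have hAcard : A.card < m := hm ▸ card_lt_card (ssubset_of_subset_of_ne hAsub hAT)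
        have hp : 0 < m - A.card := Nat.sub_pos_of_lt hAcard
        rw [hF A hAsub hAne hAT]
        have hexp : Z * Z ^ (m - A.card - 1) = Z ^ (m - A.card) := by
          conv_rhs => rw [show m - A.card = (m - A.card - 1) + 1 from
            (Nat.succ_pred_eq_of_pos hp).symm]
          rw [pow_succ]
          ring
        rw [← hexp]
        ring
  rw [Finset.sum_congr rfl key]
  have step1 : ∀ A ∈ T.powerset,
      y ^ A.card * Z ^ (m - A.card) * ∑ i ∈ A, x i
        = ∑ i ∈ T, if i ∈ A then y ^ A.card * Z ^ (m - A.card) * x i else 0 := by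
    intro A hA
    rw [Finset.sum_ite_mem, inter_eq_right.2 (mem_powerset.1 hA), Finset.mul_sum]
  rw [Finset.sum_congr rfl step1, Finset.sum_comm]
  have step2 : ∀ i ∈ T,
      (∑ A ∈ T.powerset, if i ∈ A then y ^ A.card * Z ^ (m - A.card) * x i else 0)
        = x i * (y * (y + Z) ^ (m - 1)) := by
    intro i hi
    rw [← Finset.sum_filter]
    have hcard : (T.erase i).card = m - 1 := by rw [card_erase_of_mem hi, hm]
    have hbij : ∑ A ∈ T.powerset.filter (fun A => i ∈ A),
          y ^ A.card * Z ^ (m - A.card) * x i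
        = ∑ B ∈ (T.erase i).powerset,
          y ^ (B.card + 1) * Z ^ ((m - 1) - B.card) * x i := by
      refine Finset.sum_nbij' (fun A => A.erase i) (fun B => insert i B) ?_ ?_ ?_ ?_ ?_
      · intro A hA
        exact mem_powerset.2 (erase_subset_erase i (mem_powerset.1 (mem_filter.1 hA).1))
      · intro B hB
        refine mem_filter.2 ⟨mem_powerset.2 ?_, mem_insert_self i B⟩
        exact insert_subset hi ((mem_powerset.1 hB).trans (erase_subset i T))
      · intro A hA
        exact insert_erase (mem_filter.1 hA).2
      · intro B hB
        exact erase_insert fun hiB => (notMem_erase i T) ((mem_powerset.1 hB) hiB)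
      · intro A hA
        obtain ⟨hA1, hA2⟩ := mem_filter.1 hA
        have h1 : (A.erase i).card = A.card - 1 := card_erase_of_mem hA2
        have hc1 : 1 ≤ A.card := card_pos.2 ⟨i, hA2⟩
        have hcm : A.card ≤ m := hm ▸ card_le_card (mem_powerset.1 hA1)
        rw [h1, show A.card - 1 + 1 = A.card from by omega,
          show m - 1 - (A.card - 1) = m - A.card from by omega]
    rw [hbij]
    have hterm : ∀ B ∈ (T.erase i).powerset,
        y ^ (B.card + 1) * Z ^ ((m - 1) - B.card) * x i
          = x i * y * (y ^ B.card * Z ^ ((T.erase i).card - B.card)) := by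
      intro B hB
      rw [hcard, pow_succ]
      ring
    rw [Finset.sum_congr rfl hterm, ← Finset.mul_sum, binom, hcard, mul_assoc]
  rw [Finset.sum_congr rfl step2, ← Finset.sum_mul, ← hZ]
  ring

/-! ### The main induction -/

lemma P_eq : ∀ m : ℕ, ∀ U S : Finset (Fin n), (U \ S).card = m → S ⊆ U → S.Nonempty → 0 < m →
    P U S = (∑ i ∈ U, (MvPolynomial.X i : MvPolynomial (Fin n) ℤ)) ^ (m - 1)
      * ∑ i ∈ S, MvPolynomial.X i := by
  intro m
  induction m using Nat.strong_induction_on with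
  | _ m ih =>
    intro U S hm hSU hS hpos
    have hTne : (U \ S).Nonempty := card_pos.1 (hm ▸ hpos)
    have hZ0 : (∑ i ∈ U \ S, (MvPolynomial.X i : MvPolynomial (Fin n) ℤ)) ≠ 0 :=
      sum_X_ne_zero _ hTne
    have hUsum : ∑ i ∈ U, (MvPolynomial.X i : MvPolynomial (Fin n) ℤ)
        = (∑ i ∈ S, MvPolynomial.X i) + ∑ i ∈ U \ S, MvPolynomial.X i := by
      rw [add_comm]
      exact (Finset.sum_sdiff hSU).symm
    have hF : ∀ A ⊆ U \ S, A.Nonempty → A ≠ U \ S →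
        P (U \ S) A = (∑ i ∈ U \ S, (MvPolynomial.X i : MvPolynomial (Fin n) ℤ))
          ^ (m - A.card - 1) * ∑ i ∈ A, MvPolynomial.X i := by
      intro A hAsub hAne hAT
      have hmA : ((U \ S) \ A).card = m - A.card := by rw [card_sdiff_of_subset hAsub, hm]
      have hAcard : A.card < m := hm ▸ card_lt_card (ssubset_of_subset_of_ne hAsub hAT)
      exact ih (m - A.card) (Nat.sub_lt hpos (card_pos.2 hAne)) (U \ S) A hmA hAsub hAne
        (Nat.sub_pos_of_lt hAcard)
    apply mul_left_cancel₀ hZ0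
    rw [P_decomp U S hSU,
      alg_step (U \ S) (MvPolynomial.X : Fin n → MvPolynomial (Fin n) ℤ)
        (∑ i ∈ S, MvPolynomial.X i) m hm (P (U \ S)) (P_self _) (P_empty _ hTne) hF,
      hUsum]

end ForestAux

/-- the generating polynomial of rooted forests with root set `S`
by degree sequence equals `(x_1+⋯+x_n)^(n-|S|-1) · ∑_{i∈S} x_i`. -/
theorem forest_generating_identity (n : ℕ) (S : Finset (Fin n)) (hS : S.Nonempty)
    (hlt : S.card < n) :
    ∑ f ∈ Finset.univ.filter (IsRootedForest n S),
        ∏ i : Fin n, (MvPolynomial.X i : MvPolynomial (Fin n) ℤ) ^ forestDeg n S f i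
      = (∑ i : Fin n, (MvPolynomial.X i : MvPolynomial (Fin n) ℤ)) ^ (n - S.card - 1)
          * ∑ i ∈ S, (MvPolynomial.X i : MvPolynomial (Fin n) ℤ) := by
  classical
  have hsub : S ⊆ (univ : Finset (Fin n)) := subset_univ S
  have hm : ((univ : Finset (Fin n)) \ S).card = n - S.card := by
    rw [card_sdiff_of_subset hsub, card_univ, Fintype.card_fin]
  have hfilter : Finset.univ.filter (IsRootedForest n S)
      = Finset.univ.filter (ForestAux.Cond univ S) := by
    refine Finset.filter_congr fun f _ => ?_
    exact (ForestAux.cond_univ_iff S f).symm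
  calc ∑ f ∈ Finset.univ.filter (IsRootedForest n S),
        ∏ i : Fin n, (MvPolynomial.X i : MvPolynomial (Fin n) ℤ) ^ forestDeg n S f i
      = ∑ f ∈ Finset.univ.filter (ForestAux.Cond univ S),
          ∏ v ∈ univ \ S, MvPolynomial.X (f v) := by
        rw [hfilter]
        exact Finset.sum_congr rfl fun f _ => ForestAux.weight_eq S f
    _ = ForestAux.P univ S := rfl
    _ = (∑ i : Fin n, (MvPolynomial.X i : MvPolynomial (Fin n) ℤ)) ^ (n - S.card - 1)
          * ∑ i ∈ S, MvPolynomial.X i := by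
        rw [ForestAux.P_eq (n - S.card) univ S hm hsub hS (by omega)]
end
end

section
/- Setting all x_i = 1 in the forest generating identity: the number of rooted forests on vertex set {1,…,n} with root set S (a nonempty subset of {1,…,n} of size k, with n ≥ k) equals k · n^{n−k−1} when n > k, and equals 1 when n = k. -/
open Finset

noncomputable section
open scoped Classical

/-!
Joyal's bijection, relative to the root set `S`. A forest `f` together with a vertex `v`
determines the path `v = p₀, …, p_{m-1}` from `v` to its root `r = f p_{m-1}`. Redefining `f` on
the path so that it sends the `i`-th smallest `pⱼ` to `pᵢ` turns the path into a union of cycles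
and yields a map `h` fixing `S`; conversely the cycles of `h` outside `S`, sorted and pushed
forward by `h`, return the path, and `r` says where it is attached. So `(f, v) ↦ (h, r)` is a
bijection, and `#forests · n = |S| · n ^ (n - |S|)`.
-/

open Function Set

section Orbits

variable {α : Type*} {f g : α → α} {s t : Set α} {x : α}

theorem exists_iterate_mem_of_eqOn_compl (hfg : ∀ w ∉ s, f w = g w) (h : ∃ j, g^[j] x ∈ s) :
    ∃ j, f^[j] x ∈ s := by
  obtain ⟨j, hj⟩ := h
  induction j generalizing x with
  | zero => exact ⟨0, hj⟩
  | succ j ih =>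
    by_cases hx : x ∈ s
    · exact ⟨0, hx⟩
    · obtain ⟨i, hi⟩ := ih (x := g x) hj
      exact ⟨i + 1, by rwa [iterate_succ_apply, hfg x hx]⟩

theorem exists_iterate_mem_trans (hx : ∃ j, f^[j] x ∈ s) (hs : ∀ y ∈ s, ∃ j, f^[j] y ∈ t) :
    ∃ j, f^[j] x ∈ t := by
  obtain ⟨i, hi⟩ := hx
  obtain ⟨j, hj⟩ := hs _ hi
  exact ⟨j + i, by rwa [iterate_add_apply]⟩

theorem Set.MapsTo.mem_of_iterate_mem_of_mem_periodicPts (hs : MapsTo f s s)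
    (hx : x ∈ periodicPts f) {j : ℕ} (h : f^[j] x ∈ s) : x ∈ s := by
  obtain ⟨n, hn, hper⟩ := mem_periodicPts.1 hx
  rw [← (hper.mul_const j).eq, ← Nat.sub_add_cancel (Nat.le_mul_of_pos_left j hn),
    iterate_add_apply]
  exact hs.iterate _ h

theorem isPeriodicPt_iterate_of_iterate_eq {a b : ℕ} (hab : a ≤ b) (he : f^[a] x = f^[b] x) :
    IsPeriodicPt f (b - a) (f^[a] x) := by
  rw [IsPeriodicPt, IsFixedPt, ← iterate_add_apply, Nat.sub_add_cancel hab, he]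

theorem exists_iterate_mem_periodicPts [Finite α] (f : α → α) (x : α) :
    ∃ j, f^[j] x ∈ periodicPts f := by
  obtain ⟨a, b, hne, he⟩ := Finite.exists_ne_map_eq_of_infinite fun i : ℕ => f^[i] x
  wlog hlt : a < b generalizing a b
  · exact this b a hne.symm he.symm (lt_of_le_of_ne (not_lt.1 hlt) hne.symm)
  exact ⟨a, mk_mem_periodicPts (Nat.sub_pos_of_lt hlt)
    (isPeriodicPt_iterate_of_iterate_eq hlt.le he)⟩

theorem List.nodup_iterate_of_notMem_periodicPts {n : ℕ}
    (h : ∀ i < n, f^[i] x ∉ periodicPts f) : (List.iterate f x n).Nodup := by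
  rw [List.nodup_iff_injective_getElem]
  rintro ⟨a, ha⟩ ⟨b, hb⟩ he
  simp only [List.length_iterate, List.getElem_iterate] at ha hb he
  refine Fin.ext (le_antisymm (not_lt.1 fun hlt => ?_) (not_lt.1 fun hlt => ?_))
  · exact h b hb (mk_mem_periodicPts (Nat.sub_pos_of_lt hlt)
      (isPeriodicPt_iterate_of_iterate_eq hlt.le he.symm))
  · exact h a ha (mk_mem_periodicPts (Nat.sub_pos_of_lt hlt)
      (isPeriodicPt_iterate_of_iterate_eq hlt.le he))

theorem List.map_iterate (f : α → α) (a : α) (n : ℕ) :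
    (List.iterate f a n).map f = List.iterate f (f a) n :=
  List.ext_getElem (by simp) fun i _ _ => by
    simp only [List.getElem_map, List.getElem_iterate, ← iterate_succ_apply' f i,
      iterate_succ_apply]

theorem Set.MapsTo.subset_periodicPts (hs : MapsTo f s s) (hinj : InjOn f s) (hfin : s.Finite) :
    s ⊆ periodicPts f := by
  have := hfin.to_subtype
  intro x hx
  obtain ⟨n, hn, hper⟩ := mem_periodicPts.1 ((hs.restrict_inj.2 hinj).mem_periodicPts ⟨x, hx⟩)
  refine mk_mem_periodicPts hn ?_
  simpa [IsPeriodicPt, IsFixedPt, Subtype.ext_iff, hs.coe_iterate_restrict] using hper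

theorem exists_iterate_mem_le_card [Fintype α] (h : ∃ j, f^[j] x ∈ s) :
    ∃ j ≤ Fintype.card α, f^[j] x ∈ s := by
  obtain ⟨j, hj⟩ := h
  by_cases hjc : j ≤ Fintype.card α
  · exact ⟨j, hjc, hj⟩
  obtain ⟨a, b, hab, he⟩ := Fintype.exists_ne_map_eq_of_card_lt
    (fun i : Fin (Fintype.card α + 1) => f^[i] x) (by simp)
  wlog hlt : a < b generalizing a b
  · exact this b a hab.symm he.symm (lt_of_le_of_ne (not_lt.1 hlt) hab.symm)
  -- beyond `a` the orbit has period `b - a`, so `j` can be reduced below `b`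
  have hper := isPeriodicPt_iterate_of_iterate_eq hlt.le he
  refine ⟨(j - a) % (b - a) + a, ?_, ?_⟩
  · have := Nat.mod_lt (j - a) (Nat.sub_pos_of_lt hlt)
    omega
  · rwa [iterate_add_apply, hper.iterate_mod_apply, ← iterate_add_apply,
      Nat.sub_add_cancel (by omega)]

end Orbits

section Relink

variable {α : Type*} [DecidableEq α] {l₁ l₂ : List α} {g g' : α → α}

def relink (l₁ l₂ : List α) (g : α → α) (w : α) : α :=
  if w ∈ l₁ then l₂.getD (l₁.idxOf w) w else g w

theorem relink_of_notMem {w : α} (hw : w ∉ l₁) : relink l₁ l₂ g w = g w :=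
  if_neg hw

theorem relink_getElem (hl : l₁.Nodup) {i : ℕ} (h₁ : i < l₁.length) (h₂ : i < l₂.length) :
    relink l₁ l₂ g l₁[i] = l₂[i] := by
  rw [relink, if_pos (List.getElem_mem h₁), hl.idxOf_getElem, List.getD_eq_getElem _ _ h₂]

theorem map_relink (hl : l₁.Nodup) (hlen : l₂.length = l₁.length) :
    l₁.map (relink l₁ l₂ g) = l₂ :=
  List.ext_getElem (by simp [hlen]) fun i h₁ h₂ => by
    rw [List.getElem_map, relink_getElem hl (by simpa using h₁) h₂]

theorem relink_map_eq (hl : l₁.Nodup) (hg : ∀ w ∉ l₁, g' w = g w) :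
    relink l₁ (l₁.map g) g' = g := by
  funext w
  by_cases hw : w ∈ l₁
  · obtain ⟨i, hi, rfl⟩ := List.getElem_of_mem hw
    rw [relink_getElem hl hi (by simpa), List.getElem_map]
  · rw [relink_of_notMem hw, hg w hw]

theorem iterate_relink_tail {q : List α} {r : α} (hq : (q ++ [r]).Nodup) (g : α → α) {i : ℕ}
    (hi : i ≤ q.length) :
    (relink q (q ++ [r]).tail g)^[i] ((q ++ [r])[0]'(by simp)) =
      (q ++ [r])[i]'(by simp; omega) := by
  induction i with
  | zero => rfl
  | succ i ih =>
    rw [iterate_succ_apply', ih (by omega), List.getElem_append_left (by omega),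
      relink_getElem (List.nodup_append.1 hq).1 _ (by simp; omega), List.getElem_tail]

end Relink

section ParentMap

variable {α : Type*} {S : Finset α} {f : α → α}

def IsParentMap (S : Finset α) (f : α → α) : Prop :=
  (∀ v ∈ S, f v = v) ∧ ∀ v, ∃ j, f^[j] v ∈ S

theorem mapsTo_self_of_forall_apply_eq (hS : ∀ v ∈ S, f v = v) : MapsTo f S S :=
  fun v hv => (hS v hv).symm ▸ hv

theorem IsParentMap.periodicPts_subset (hf : IsParentMap S f) : periodicPts f ⊆ S :=
  fun _ hx => (mapsTo_self_of_forall_apply_eq hf.1).mem_of_iterate_mem_of_mem_periodicPts hx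
    (hf.2 _).choose_spec

theorem isRootedForest_iff_isParentMap {n : ℕ} {S : Finset (Fin n)} {f : Fin n → Fin n} :
    IsRootedForest n S f ↔ IsParentMap S f := by
  refine and_congr_right fun _ => forall_congr' fun v => ⟨fun ⟨j, _, hj⟩ => ⟨j, hj⟩, fun h => ?_⟩
  simpa using exists_iterate_mem_le_card (s := (S : Set (Fin n))) h

end ParentMap

section Joyal

variable {α : Type*} [LinearOrder α] {S : Finset α}

def cycleSet [Fintype α] (S : Finset α) (h : α → α) : Finset α :=
  {c | c ∉ S ∧ c ∈ periodicPts h}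

section Forward

variable {f : α → α} (hf : IsParentMap S f) (v : α)

def hitTime : ℕ := Nat.find (hf.2 v)

def pathToRoot : List α := List.iterate f v (hitTime hf v)

def rootOf : α := f^[hitTime hf v] v

def joyalFwd : α → α :=
  relink ((pathToRoot hf v).toFinset.sort (· ≤ ·)) (pathToRoot hf v) f

theorem rootOf_mem : rootOf hf v ∈ S :=
  Nat.find_spec (hf.2 v)

theorem notMem_of_mem_pathToRoot {w : α} (hw : w ∈ pathToRoot hf v) : w ∉ S := by
  obtain ⟨i, hi, rfl⟩ := List.mem_iterate.1 hw
  exact Nat.find_min (hf.2 v) hi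

theorem pathToRoot_append_rootOf :
    pathToRoot hf v ++ [rootOf hf v] = List.iterate f v (hitTime hf v + 1) :=
  (List.iterate_add f v _ 1).symm

theorem nodup_pathToRoot : (pathToRoot hf v).Nodup :=
  List.nodup_iterate_of_notMem_periodicPts fun _ hi hper =>
    Nat.find_min (hf.2 v) hi (hf.periodicPts_subset hper)

theorem joyalFwd_of_notMem {w : α} (hw : w ∉ pathToRoot hf v) : joyalFwd hf v w = f w :=
  relink_of_notMem (by simpa using hw)

theorem joyalFwd_fixes : ∀ w ∈ S, joyalFwd hf v w = w := fun w hw =>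
  (joyalFwd_of_notMem hf v fun h => notMem_of_mem_pathToRoot hf v h hw).trans (hf.1 w hw)

theorem map_sort_joyalFwd :
    ((pathToRoot hf v).toFinset.sort (· ≤ ·)).map (joyalFwd hf v) = pathToRoot hf v :=
  map_relink (Finset.sort_nodup _ _) <| by
    rw [Finset.length_sort, List.toFinset_card_of_nodup (nodup_pathToRoot hf v)]

variable [Fintype α]

theorem cycleSet_joyalFwd : cycleSet S (joyalFwd hf v) = (pathToRoot hf v).toFinset := by
  set P := (pathToRoot hf v).toFinset
  have hsort := map_sort_joyalFwd hf v
  have hmaps : MapsTo (joyalFwd hf v) P P := fun w hw => by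
    rw [Finset.mem_coe, List.mem_toFinset, ← hsort]
    exact List.mem_map_of_mem ((Finset.mem_sort (α := α) (· ≤ ·)).2 hw)
  ext c
  simp only [cycleSet, Finset.mem_filter, Finset.mem_univ, true_and]
  constructor
  · rintro ⟨hcS, hc⟩
    have hreach : ∃ j, (joyalFwd hf v)^[j] c ∈ (S ∪ P : Set α) :=
      exists_iterate_mem_of_eqOn_compl
        (fun w hw => joyalFwd_of_notMem hf v fun h => hw (Or.inr (List.mem_toFinset.2 h)))
        (exists_iterate_mem_trans (hf.2 c) fun y hy => ⟨0, Or.inl hy⟩)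
    have := ((mapsTo_self_of_forall_apply_eq (joyalFwd_fixes hf v)).union_union hmaps
      ).mem_of_iterate_mem_of_mem_periodicPts hc hreach.choose_spec
    exact this.resolve_left hcS
  · intro hc
    refine ⟨notMem_of_mem_pathToRoot hf v (List.mem_toFinset.1 hc), ?_⟩
    refine hmaps.subset_periodicPts (fun x hx y hy => ?_) P.finite_toSet hc
    refine List.inj_on_of_nodup_map ?_ ((Finset.mem_sort (α := α) (· ≤ ·)).2 hx)
      ((Finset.mem_sort (α := α) (· ≤ ·)).2 hy)
    rw [hsort]
    exact nodup_pathToRoot hf v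

end Forward

section Backward

variable [Fintype α] {h : α → α} (hh : ∀ v ∈ S, h v = v) {r : α} (hr : r ∈ S)

def cycleList (S : Finset α) (h : α → α) : List α :=
  ((cycleSet S h).sort (· ≤ ·)).map h

def joyalBwd (S : Finset α) (h : α → α) (r : α) : α → α :=
  relink (cycleList S h) (cycleList S h ++ [r]).tail h

def joyalStart (S : Finset α) (h : α → α) (r : α) : α :=
  (cycleList S h ++ [r])[0]'(by simp)

theorem mem_cycleSet {c : α} : c ∈ cycleSet S h ↔ c ∉ S ∧ c ∈ periodicPts h := by
  simp [cycleSet]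

include hh in
theorem mapsTo_cycleSet : MapsTo h (cycleSet S h) (cycleSet S h) := by
  intro c hc
  obtain ⟨hcS, hc⟩ := mem_cycleSet.1 hc
  have hS := mapsTo_self_of_forall_apply_eq hh
  exact mem_cycleSet.2 ⟨fun hhc => hcS (hS.mem_of_iterate_mem_of_mem_periodicPts hc (j := 1) hhc),
    (bijOn_periodicPts h).mapsTo hc⟩

theorem injOn_cycleSet : InjOn h (cycleSet S h) :=
  (bijOn_periodicPts h).injOn.mono fun _ hc => (mem_cycleSet.1 hc).2

include hh in
theorem mem_cycleList {w : α} : w ∈ cycleList S h ↔ w ∈ cycleSet S h := by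
  simp only [cycleList, List.mem_map, Finset.mem_sort]
  refine ⟨fun ⟨c, hc, hcw⟩ => hcw ▸ mapsTo_cycleSet hh hc, fun hw => ?_⟩
  obtain ⟨hwS, hw⟩ := mem_cycleSet.1 hw
  obtain ⟨c, hc, rfl⟩ := (bijOn_periodicPts h).surjOn hw
  exact ⟨c, mem_cycleSet.2 ⟨fun hcS => hwS (by rwa [hh c hcS]), hc⟩, rfl⟩

theorem nodup_cycleList : (cycleList S h).Nodup :=
  (Finset.sort_nodup _ _).map_on fun _ hx _ hy =>
    injOn_cycleSet (by simpa using hx) (by simpa using hy)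

include hh hr

theorem nodup_cycleList_append : (cycleList S h ++ [r]).Nodup :=
  List.nodup_append.2 ⟨nodup_cycleList, List.nodup_singleton r, fun a ha b hb hab =>
    (mem_cycleSet.1 ((mem_cycleList hh).1 ha)).1
      (by rw [hab, List.eq_of_mem_singleton hb]; exact hr)⟩

omit hr in
theorem joyalBwd_of_notMem {w : α} (hw : w ∉ cycleSet S h) : joyalBwd S h r w = h w :=
  relink_of_notMem ((mem_cycleList hh).not.2 hw)

theorem iterate_joyalBwd {i : ℕ} (hi : i ≤ (cycleList S h).length) :
    (joyalBwd S h r)^[i] (joyalStart S h r) = (cycleList S h ++ [r])[i]'(by simp; omega) :=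
  iterate_relink_tail (nodup_cycleList_append hh hr) h hi

theorem isParentMap_joyalBwd : IsParentMap S (joyalBwd S h r) := by
  have hfix : ∀ w ∈ S, joyalBwd S h r w = w := fun w hw =>
    (joyalBwd_of_notMem hh fun hc => (mem_cycleSet.1 hc).1 hw).trans (hh w hw)
  refine ⟨hfix, fun x => ?_⟩
  have hreach : ∃ j, (joyalBwd S h r)^[j] x ∈ (S ∪ cycleSet S h : Set α) := by
    refine exists_iterate_mem_of_eqOn_compl (g := h) (fun w hw => joyalBwd_of_notMem hh
      fun hc => hw (Or.inr hc)) (exists_iterate_mem_trans (exists_iterate_mem_periodicPts h x)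
      fun y hy => ⟨0, ?_⟩)
    by_cases hyS : y ∈ S
    exacts [Or.inl hyS, Or.inr (mem_cycleSet.2 ⟨hyS, hy⟩)]
  refine exists_iterate_mem_trans hreach fun y hy => hy.elim (fun hyS => ⟨0, hyS⟩) fun hyC => ?_
  -- `y` lies on the path from `joyalStart` to `r`
  obtain ⟨i, hi, rfl⟩ := List.getElem_of_mem ((mem_cycleList hh).2 hyC)
  refine ⟨(cycleList S h).length - i, ?_⟩
  have hy := iterate_joyalBwd hh hr hi.le
  rw [List.getElem_append_left hi] at hy
  rw [← hy, ← iterate_add_apply, Nat.sub_add_cancel hi.le, iterate_joyalBwd hh hr le_rfl]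
  simpa using hr

theorem hitTime_joyalBwd :
    hitTime (isParentMap_joyalBwd hh hr) (joyalStart S h r) = (cycleList S h).length := by
  rw [hitTime, Nat.find_eq_iff]
  refine ⟨by simpa [iterate_joyalBwd hh hr le_rfl] using hr, fun i hi => ?_⟩
  rw [iterate_joyalBwd hh hr hi.le, List.getElem_append_left hi]
  exact (mem_cycleSet.1 ((mem_cycleList hh).1 (List.getElem_mem hi))).1

theorem pathToRoot_joyalBwd :
    pathToRoot (isParentMap_joyalBwd hh hr) (joyalStart S h r) = cycleList S h :=
  List.ext_getElem (by simp [pathToRoot, hitTime_joyalBwd hh hr]) fun i _ hi => by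
    simp only [pathToRoot, List.getElem_iterate]
    rw [iterate_joyalBwd hh hr hi.le, List.getElem_append_left hi]

theorem rootOf_joyalBwd : rootOf (isParentMap_joyalBwd hh hr) (joyalStart S h r) = r := by
  rw [rootOf, hitTime_joyalBwd hh hr, iterate_joyalBwd hh hr le_rfl, List.getElem_concat_length rfl]

theorem joyalFwd_joyalBwd : joyalFwd (isParentMap_joyalBwd hh hr) (joyalStart S h r) = h := by
  have hC : (cycleList S h).toFinset = cycleSet S h := by ext; simp [mem_cycleList hh]
  rw [joyalFwd, pathToRoot_joyalBwd hh hr, hC]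
  exact relink_map_eq (Finset.sort_nodup _ _) fun w hw => joyalBwd_of_notMem hh (by simpa using hw)

end Backward

section ForwardBackward

variable [Fintype α] {f : α → α} (hf : IsParentMap S f) (v : α)

theorem cycleList_joyalFwd : cycleList S (joyalFwd hf v) = pathToRoot hf v := by
  rw [cycleList, cycleSet_joyalFwd, map_sort_joyalFwd]

theorem joyalBwd_joyalFwd : joyalBwd S (joyalFwd hf v) (rootOf hf v) = f := by
  rw [joyalBwd, cycleList_joyalFwd, pathToRoot_append_rootOf, List.iterate, List.tail_cons,
    ← List.map_iterate]
  exact relink_map_eq (nodup_pathToRoot hf v) fun w hw => joyalFwd_of_notMem hf v hw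

theorem joyalStart_joyalFwd : joyalStart S (joyalFwd hf v) (rootOf hf v) = v := by
  simp only [joyalStart, cycleList_joyalFwd, pathToRoot_append_rootOf, List.getElem_iterate,
    iterate_zero_apply]

end ForwardBackward

end Joyal

section Counting

variable {α : Type*} [Fintype α]

def joyalEquiv [LinearOrder α] (S : Finset α) :
    {f : α → α // IsParentMap S f} × α ≃ {h : α → α // ∀ v ∈ S, h v = v} × S where
  toFun x := (⟨joyalFwd x.1.2 x.2, joyalFwd_fixes x.1.2 x.2⟩,
    ⟨rootOf x.1.2 x.2, rootOf_mem x.1.2 x.2⟩)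
  invFun y := (⟨joyalBwd S y.1 y.2, isParentMap_joyalBwd y.1.2 y.2.2⟩, joyalStart S y.1 y.2)
  left_inv := fun ⟨⟨_, hf⟩, v⟩ =>
    Prod.ext (Subtype.ext (joyalBwd_joyalFwd hf v)) (joyalStart_joyalFwd hf v)
  right_inv := fun ⟨⟨_, hh⟩, ⟨_, hr⟩⟩ =>
    Prod.ext (Subtype.ext (joyalFwd_joyalBwd hh hr)) (Subtype.ext (rootOf_joyalBwd hh hr))

variable [DecidableEq α]

theorem card_maps_fixing_pointwise (S : Finset α) :
    Fintype.card {h : α → α // ∀ v ∈ S, h v = v} = Fintype.card α ^ #Sᶜ := by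
  have : ({h | ∀ v ∈ S, h v = v} : Finset (α → α)) =
      Fintype.piFinset fun v => if v ∈ S then {v} else univ := by
    ext h
    simp only [Finset.mem_filter, Finset.mem_univ, true_and, Fintype.mem_piFinset]
    refine forall_congr' fun v => ?_
    split_ifs with hv <;> simp [hv]
  rw [Fintype.card_subtype, this, Fintype.card_piFinset]
  simp [apply_ite Finset.card, Finset.prod_ite, Finset.filter_not, Finset.compl_eq_univ_sdiff]

theorem card_isParentMap_mul_card (S : Finset α) :
    Fintype.card {f : α → α // IsParentMap S f} * Fintype.card α = #S * Fintype.card α ^ #Sᶜ := by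
  have hcard : Nat.card ({f : α → α // IsParentMap S f} × α) =
      Nat.card ({h : α → α // ∀ v ∈ S, h v = v} × S) := by
    let _ : LinearOrder α := LinearOrder.lift' _ (Fintype.equivFin α).injective
    exact Nat.card_congr (joyalEquiv S)
  rw [Nat.card_prod, Nat.card_prod] at hcard
  simp only [Nat.card_eq_fintype_card, card_maps_fixing_pointwise, Fintype.card_coe] at hcard
  rw [hcard, mul_comm]

end Counting

theorem forest_count_general (n k : ℕ) (S : Finset (Fin n)) (hcard : S.card = k)
    (hk : 1 ≤ k) :
    (Finset.univ.filter (IsRootedForest n S)).card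
      = if n = k then 1 else k * n ^ (n - k - 1) := by
  have hkn : k ≤ n := hcard ▸ (card_le_univ S).trans_eq (Fintype.card_fin n)
  have hcount := card_isParentMap_mul_card S
  rw [card_compl, Fintype.card_fin, hcard, Fintype.card_subtype] at hcount
  simp only [← isRootedForest_iff_isParentMap] at hcount
  split_ifs with hnk
  · subst hnk
    simpa [Nat.pos_iff_ne_zero.1 hk] using hcount
  · rw [show n - k = n - k - 1 + 1 by omega, pow_succ, ← mul_assoc] at hcount
    exact Nat.eq_of_mul_eq_mul_right (by omega) hcount

/-- generalized Cayley formula: the number of rooted forests on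
`{1,…,n}` with root set `S` of size `k` is `k · n^(n-k-1)` if `n > k`, and `1`
if `n = k`. -/
theorem forest_count (n k : ℕ) (S : Finset (Fin n)) (hcard : S.card = k)
    (hk : 1 ≤ k) (hkn : k ≤ n) :
    (Finset.univ.filter (IsRootedForest n S)).card
      = if n = k then 1 else k * n ^ (n - k - 1) :=
  forest_count_general n k S hcard hk
end
end

section
/- Summing over all degree sequences: for n ≥ 2, ∑_{δ_1+⋯+δ_n = n−1, δ_i ≥ 0} multinomial(n−2; δ_1 − 1, δ_2, …, δ_n) = n^{n−2}, recovering Cayley's formula for the number of labelled trees rooted at vertex 1 (equivalently, labelled trees on n vertices). -/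
/-! Removing one unit from the entry at `z` is a bijection from the tuples with `δ z ≠ 0` and
sum `n - 1` onto the tuples with sum `n - 2`, so the sum becomes `∑_k multinomial(n - 2; k)`,
which is `(1 + ⋯ + 1) ^ (n - 2) = n ^ (n - 2)` by the multinomial theorem. -/

open Finset Function

namespace Finset

variable {ι : Type*} [DecidableEq ι] {s : Finset ι} {z : ι}

lemma update_succ_mem_piAntidiag_iff (hz : z ∈ s) {δ : ι → ℕ} {n : ℕ} :
    update δ z (δ z + 1) ∈ piAntidiag s (n + 1) ↔ δ ∈ piAntidiag s n := by
  have hsupp : (∀ i, update δ z (δ z + 1) i ≠ 0 → i ∈ s) ↔ ∀ i, δ i ≠ 0 → i ∈ s :=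
    forall_congr' fun i ↦ by
      rcases eq_or_ne i z with rfl | hi
      · simp [hz]
      · rw [update_of_ne hi]
  rw [mem_piAntidiag, mem_piAntidiag, hsupp, sum_update_of_mem hz,
    sum_eq_add_sum_sdiff_singleton_of_mem hz δ, add_right_comm, add_left_inj]

lemma sum_piAntidiag_succ_ite_update {M : Type*} [AddCommMonoid M] (hz : z ∈ s) (m : ℕ)
    (f : (ι → ℕ) → M) :
    ∑ δ ∈ piAntidiag s (m + 1), (if δ z = 0 then 0 else f (update δ z (δ z - 1)))
      = ∑ k ∈ piAntidiag s m, f k := by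
  have hinv {δ : ι → ℕ} (hδ : δ z ≠ 0) : update (update δ z (δ z - 1)) z (δ z - 1 + 1) = δ := by
    rw [update_idem, Nat.sub_add_cancel (Nat.pos_of_ne_zero hδ), update_eq_self]
  rw [sum_ite, sum_const_zero, zero_add]
  refine sum_nbij' (fun δ ↦ update δ z (δ z - 1)) (fun k ↦ update k z (k z + 1))
    (fun δ hδ ↦ ?_) (fun k hk ↦ ?_) (fun δ hδ ↦ ?_) (fun k _ ↦ by simp) fun _ _ ↦ rfl
  · rw [mem_filter] at hδ
    rw [← update_succ_mem_piAntidiag_iff hz, update_self, hinv hδ.2]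
    exact hδ.1
  · exact mem_filter.2 ⟨(update_succ_mem_piAntidiag_iff hz).2 hk, by simp⟩
  · simpa using hinv (mem_filter.1 hδ).2

lemma sum_multinomial_piAntidiag (s : Finset ι) (n : ℕ) :
    ∑ k ∈ piAntidiag s n, Nat.multinomial s k = #s ^ n := by
  simpa using (sum_pow_eq_sum_piAntidiag s (fun _ ↦ (1 : ℕ)) n).symm

end Finset

theorem cayley_formula_sum_general (n : ℕ) (hn : 2 ≤ n) (z : Fin n) :
    ∑ δ ∈ Finset.Nat.antidiagonalTuple n (n - 1),
        (if δ z = 0 then 0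
          else Nat.multinomial Finset.univ (Function.update δ z (δ z - 1)))
      = n ^ (n - 2) := by
  obtain ⟨m, rfl⟩ : ∃ m, n = m + 2 := ⟨n - 2, by omega⟩
  rw [← piAntidiag_univ_fin_eq_antidiagonalTuple, Nat.add_succ_sub_one, Nat.add_sub_cancel,
    sum_piAntidiag_succ_ite_update (mem_univ z), sum_multinomial_piAntidiag, card_univ,
    Fintype.card_fin]

/-- summing the degree-sequence tree counts over all degree
sequences recovers Cayley's formula: for `n ≥ 2`,
`∑_{δ_1+⋯+δ_n = n-1} multinomial(n-2; δ_1 - 1, δ_2, …, δ_n) = n^(n-2)`,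
where a multinomial coefficient with a negative entry is `0` (here `z` is the
first vertex, `z = 0` in `Fin n`). -/
theorem cayley_formula_sum (n : ℕ) (hn : 2 ≤ n) (z : Fin n) (hz : (z : ℕ) = 0) :
    ∑ δ ∈ Finset.Nat.antidiagonalTuple n (n - 1),
        (if δ z = 0 then 0
          else Nat.multinomial Finset.univ (Function.update δ z (δ z - 1)))
      = n ^ (n - 2) :=
  cayley_formula_sum_general n hn z
end

section
/- Genus-0 two-part double Hurwitz number: for positive integers a, b, c, d with a + b = c + d and c < min(a,b) (hence d > max(a,b)), H_0((a,b),(c,d)) = 2d, where H_0((a,b),(c,d)) is defined as the normalized count of transitive factorizations (σ_1, τ_1, τ_2, σ_2) in S_{a+b} with σ_1 of cycle type (a,b) with labelled cycles, σ_2 of cycle type (c,d) with labelled cycles, τ_1, τ_2 transpositions, and σ_2 τ_2 τ_1 σ_1 = id, divided by (a+b)!. -/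
open Equiv

/-- `σ` is a permutation of `Fin n` of cycle type with exactly two cycles,
with the cycle labelled `1` being the set `A` (of size `a`): `A` is
`σ`-invariant, `σ` acts with a single cycle on `A` and a single cycle on its
complement.  The pair `(σ, A)` is a permutation with labelled cycles. -/
def IsLabelledTwoCycle (n a : ℕ) (σ : Perm (Fin n)) (A : Finset (Fin n)) : Prop :=
  A.card = a ∧ (∀ x ∈ A, σ x ∈ A) ∧
    (∀ x ∈ A, ∀ y ∈ A, σ.SameCycle x y) ∧
    (∀ x ∈ Aᶜ, ∀ y ∈ Aᶜ, σ.SameCycle x y)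

/-- Tuples `(σ₁, τ₁, τ₂, σ₂)` in `S_{a+b}` contributing to
`H_0((a,b),(c,d))`: `σ₁` of cycle type `(a,b)` with labelled cycles (the
cycle labelled `1` is `A`, of length `a`), `σ₂` of cycle type `(c,d)` with
labelled cycles (the cycle labelled `1` is `C`, of length `c`),
`τ₁, τ₂` transpositions, `σ₂ τ₂ τ₁ σ₁ = id`, transitive. -/
def HurwitzTuplesTwoPart (a b c d : ℕ) :
    Set ((Perm (Fin (a + b)) × Finset (Fin (a + b))) × Perm (Fin (a + b)) ×
      Perm (Fin (a + b)) × (Perm (Fin (a + b)) × Finset (Fin (a + b)))) :=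
  {t | IsLabelledTwoCycle (a + b) a t.1.1 t.1.2 ∧
    IsLabelledTwoCycle (a + b) c t.2.2.2.1 t.2.2.2.2 ∧
    t.2.1.IsSwap ∧ t.2.2.1.IsSwap ∧
    t.2.2.2.1 * t.2.2.1 * t.2.1 * t.1.1 = 1 ∧
    ∀ x y : Fin (a + b),
      ∃ g ∈ Subgroup.closure {t.1.1, t.2.1, t.2.2.1, t.2.2.2.1}, g x = y}

/-!
Write `σ₂ = σ₁⁻¹ τ₁ τ₂` (transpositions are involutions). Multiplying a permutation on the right
by `swap x y` joins the cycles through `x` and `y` when they differ, and cuts their common cycle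
into two arcs otherwise. To pass from the cycles `A, Aᶜ` of `σ₁⁻¹` (sizes `a, b`, `n = a + b`)
to cycles `C, Cᶜ` with `#C = c < a, b`, either `τ₁` joins `A` and `Aᶜ` (`ab` choices) and `τ₂`
cuts an arc of length `c` off the resulting `n`-cycle (`n` choices, because `c ≠ d`), or `τ₁`
cuts off an arc of length `c` of `A`, determined by the point preceding it (`a` choices), and
`τ₂` joins the rest of `A` to `Aᶜ` (`(a - c) b` choices), or the same with `A` and `Aᶜ`
exchanged. This gives `ab (n + (a - c) + (b - c)) = 2abd` factorizations for each labelled `σ₁`,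
all of them transitive because `Cᶜ` meets both `A` and `Aᶜ`. Finally, a labelled permutation of
type `(a, b)` with a marked point on each cycle is the same as a bijection
`Fin a ⊕ Fin b ≃ Fin n`, so there are `n! / (ab)` labelled permutations `σ₁`.
-/

open Finset
open scoped Nat

namespace Equiv.Perm

/-! ### Cycles on finite sets, and cutting and joining them by a transposition -/

variable {α : Type*} {f g : Perm α} {s : Finset α} {x y : α}

theorem bijOn_of_mapsTo (hs : ∀ z ∈ s, f z ∈ s) : Set.BijOn f s s :=
  (s.finite_toSet.injOn_iff_bijOn_of_mapsTo hs).mp f.injective.injOn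

theorem mem_of_sameCycle_of_mapsTo (hs : ∀ z ∈ s, f z ∈ s) (hx : x ∈ s) (h : f.SameCycle x y) :
    y ∈ s := by
  obtain ⟨i, rfl⟩ := h
  exact ((bijOn_of_mapsTo hs).perm_zpow i).mapsTo hx

theorem isCycleOn_of_forall_sameCycle (hs : ∀ z ∈ s, f z ∈ s)
    (h : ∀ z ∈ s, ∀ w ∈ s, f.SameCycle z w) : f.IsCycleOn s :=
  ⟨bijOn_of_mapsTo hs, fun _ hz _ hw => h _ hz _ hw⟩

theorem IsCycleOn.pow_apply_mem (hf : f.IsCycleOn s) (hx : x ∈ s) (n : ℕ) : (f ^ n) x ∈ s :=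
  hf.1.mapsTo.perm_pow n hx

theorem IsCycleOn.pow_injOn (hf : f.IsCycleOn s) (hx : x ∈ s) {i j : ℕ} (hi : i < #s)
    (hj : j < #s) (h : (f ^ i) x = (f ^ j) x) : i = j := by
  have := (hf.pow_apply_eq_pow_apply hx).mp h
  rwa [Nat.ModEq, Nat.mod_eq_of_lt hi, Nat.mod_eq_of_lt hj] at this

theorem IsCycleOn.pow_apply_ne_self (hf : f.IsCycleOn s) (hx : x ∈ s) {i : ℕ} (hi : 0 < i)
    (his : i < #s) : (f ^ i) x ≠ x := fun h =>
  hi.ne' (hf.pow_injOn hx his (by omega) (by rw [h, pow_zero, one_apply]))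

theorem pow_apply_eq_pow_apply_of_forall_lt {m : ℕ}
    (h : ∀ j < m, g ((f ^ j) x) = f ((f ^ j) x)) : (g ^ m) x = (f ^ m) x := by
  induction m with
  | zero => rfl
  | succ m ih =>
    rw [pow_succ', mul_apply, ih fun j hj => h j (by omega), h m (by omega), ← mul_apply,
      ← pow_succ']

theorem IsCycleOn.congr (hf : f.IsCycleOn s) (h : ∀ z ∈ s, g z = f z) : g.IsCycleOn s := by
  refine ⟨bijOn_of_mapsTo fun z hz => h z hz ▸ hf.1.mapsTo hz, fun z hz w hw => ?_⟩
  obtain ⟨m, -, rfl⟩ := hf.exists_pow_eq hz hw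
  exact ⟨m, by rw [zpow_natCast, pow_apply_eq_pow_apply_of_forall_lt fun j _ =>
    h _ (hf.pow_apply_mem hz j)]⟩

section DecidableEq

variable [DecidableEq α]

theorem IsCycleOn.mul_swap (hf : f.IsCycleOn s) (hx : x ∉ s) (hy : y ∉ s) :
    (f * swap x y).IsCycleOn s :=
  hf.congr fun z hz => by
    rw [mul_apply, swap_apply_of_ne_of_ne (ne_of_mem_of_not_mem hz hx)
      (ne_of_mem_of_not_mem hz hy)]

theorem swap_apply_mem_iff {z : α} (h : x ∈ s ↔ y ∈ s) : swap x y z ∈ s ↔ z ∈ s := by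
  rw [swap_apply_def]
  split_ifs with h₁ h₂
  · rw [h₁]; exact h.symm
  · rw [h₂]; exact h
  · rfl

theorem eq_or_eq_of_swap_eq_swap {x' y' : α} (hxy : x ≠ y) (h : swap x y = swap x' y') :
    x = x' ∧ y = y' ∨ x = y' ∧ y = x' := by
  have hy : y = swap x' y' x := by rw [← h, swap_apply_left]
  by_cases h₁ : x = x'
  · subst h₁; rw [swap_apply_left] at hy; exact .inl ⟨rfl, hy⟩
  by_cases h₂ : x = y'
  · subst h₂; rw [swap_apply_right] at hy; exact .inr ⟨rfl, hy⟩
  rw [swap_apply_of_ne_of_ne h₁ h₂] at hy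
  exact absurd hy.symm hxy

theorem mul_mul_mul_eq_one_iff_of_isSwap {σ₁ σ₂ τ₁ τ₂ : Perm α} (h₁ : τ₁.IsSwap)
    (h₂ : τ₂.IsSwap) : σ₂ * τ₂ * τ₁ * σ₁ = 1 ↔ σ₂ = σ₁⁻¹ * τ₁ * τ₂ := by
  obtain ⟨x, y, -, rfl⟩ := h₁
  obtain ⟨x', y', -, rfl⟩ := h₂
  rw [mul_assoc, mul_assoc, mul_eq_one_iff_eq_inv, mul_inv_rev, mul_inv_rev, swap_inv, swap_inv,
    mul_assoc]

def arc (f : Perm α) (x : α) (m : ℕ) : Finset α :=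
  (range m).image fun j => (f ^ (j + 1)) x

theorem mem_arc {m : ℕ} : y ∈ arc f x m ↔ ∃ j < m, (f ^ (j + 1)) x = y := by
  simp [arc]

theorem arc_nonempty {m : ℕ} (hm : 0 < m) : (arc f x m).Nonempty :=
  ⟨_, mem_arc.mpr ⟨0, hm, rfl⟩⟩

theorem arc_add (t m : ℕ) : arc f x (t + m) = arc f x t ∪ arc f ((f ^ t) x) m := by
  ext y
  simp only [mem_union, mem_arc, ← mul_apply, ← pow_add]
  constructor
  · rintro ⟨j, hj, rfl⟩
    by_cases hjt : j < t
    · exact .inl ⟨j, hjt, rfl⟩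
    · exact .inr ⟨j - t, by omega, by rw [show j - t + 1 + t = j + 1 by omega]⟩
  · rintro (⟨j, hj, rfl⟩ | ⟨j, hj, rfl⟩)
    · exact ⟨j, by omega, rfl⟩
    · exact ⟨t + j, by omega, by rw [show j + 1 + t = t + j + 1 by omega]⟩

theorem arc_subset (hs : ∀ z ∈ s, f z ∈ s) (hx : x ∈ s) {m : ℕ} : arc f x m ⊆ s := by
  intro y hy
  obtain ⟨j, -, rfl⟩ := mem_arc.mp hy
  exact Set.MapsTo.perm_pow hs (j + 1) hx

theorem IsCycleOn.card_arc (hf : f.IsCycleOn s) (hx : x ∈ s) {m : ℕ} (hm : m ≤ #s) :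
    #(arc f x m) = m := by
  rw [arc, card_image_of_injOn, card_range]
  intro i hi j hj h
  simp only [coe_range, Set.mem_Iio, pow_succ, mul_apply] at hi hj h
  exact hf.pow_injOn (hf.1.mapsTo hx) (by omega) (by omega) h

theorem IsCycleOn.arc_card (hf : f.IsCycleOn s) (hx : x ∈ s) : arc f x #s = s :=
  eq_of_subset_of_card_le (arc_subset (fun _ hz => hf.1.mapsTo hz) hx) (hf.card_arc hx le_rfl).ge

theorem IsCycleOn.arc_union_arc (hf : f.IsCycleOn s) (hx : x ∈ s) {t : ℕ} (ht : t ≤ #s) :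
    arc f x t ∪ arc f ((f ^ t) x) (#s - t) = s := by
  rw [← arc_add, Nat.add_sub_cancel' ht, hf.arc_card hx]

theorem IsCycleOn.disjoint_arc (hf : f.IsCycleOn s) (hx : x ∈ s) {t : ℕ} (ht : t ≤ #s) :
    _root_.Disjoint (arc f x t) (arc f ((f ^ t) x) (#s - t)) := by
  rw [← card_union_eq_card_add_card, hf.arc_union_arc hx ht, hf.card_arc hx ht,
    hf.card_arc (hf.pow_apply_mem hx t) (Nat.sub_le _ _), Nat.add_sub_cancel' ht]

theorem IsCycleOn.self_notMem_arc (hf : f.IsCycleOn s) (hx : x ∈ s) {m : ℕ} (hm : m < #s) :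
    x ∉ arc f x m := by
  intro h
  obtain ⟨j, hj, hjx⟩ := mem_arc.mp h
  exact hf.pow_apply_ne_self hx (Nat.succ_pos j) (by omega) hjx

theorem isCycleOn_arc {m : ℕ} (hm : 0 < m) (h : (f ^ m) x = x) : f.IsCycleOn (arc f x m) := by
  have hx (z : α) (hz : z ∈ arc f x m) : f.SameCycle x z := by
    obtain ⟨j, -, rfl⟩ := mem_arc.mp hz
    exact sameCycle_pow_right.mpr (SameCycle.refl f x)
  refine isCycleOn_of_forall_sameCycle (fun z hz => ?_) fun z hz w hw =>
    (hx z hz).symm.trans (hx w hw)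
  obtain ⟨j, hj, rfl⟩ := mem_arc.mp hz
  rw [← mul_apply, ← pow_succ']
  rcases Nat.lt_or_ge (j + 1) m with hjm | hjm
  · exact mem_arc.mpr ⟨j + 1, hjm, rfl⟩
  · refine mem_arc.mpr ⟨0, hm, ?_⟩
    rw [show j + 1 + 1 = m + 1 by omega, pow_succ' f m, mul_apply, h, zero_add, pow_one]

/-- Starting at `y`, the permutation `f * swap x y` walks along the `f`-orbit of `x` for as long
as that orbit avoids `x` and `y`. -/
theorem mul_swap_pow_succ_apply {m : ℕ} (h : ∀ i, 0 < i → i < m → (f ^ i) x ≠ x ∧ (f ^ i) x ≠ y)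
    {j : ℕ} (hj : j < m) : ((f * swap x y) ^ (j + 1)) y = (f ^ (j + 1)) x := by
  rw [pow_succ, mul_apply, mul_apply, swap_apply_right, pow_apply_eq_pow_apply_of_forall_lt,
    ← mul_apply, ← pow_succ]
  intro i hi
  show f (swap x y ((f ^ i) (f x))) = f ((f ^ i) (f x))
  rw [← mul_apply (f ^ i) f x, ← pow_succ, swap_apply_of_ne_of_ne (h _ (by omega) (by omega)).1
    (h _ (by omega) (by omega)).2]

theorem arc_mul_swap {m : ℕ} (h : ∀ i, 0 < i → i < m → (f ^ i) x ≠ x ∧ (f ^ i) x ≠ y) :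
    arc (f * swap x y) y m = arc f x m :=
  image_congr fun _ hj => mul_swap_pow_succ_apply h (mem_range.mp hj)

theorem IsCycleOn.isCycleOn_arc_mul_swap (hf : f.IsCycleOn s) (hx : x ∈ s) {t : ℕ} (ht : 0 < t)
    (hts : t < #s) : (f * swap x ((f ^ t) x)).IsCycleOn (arc f x t) := by
  have h : ∀ i, 0 < i → i < t → (f ^ i) x ≠ x ∧ (f ^ i) x ≠ (f ^ t) x := fun i hi hit =>
    ⟨hf.pow_apply_ne_self hx hi (by omega),
      fun e => hit.ne (hf.pow_injOn hx (by omega) hts e)⟩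
  rw [← arc_mul_swap h]
  refine isCycleOn_arc ht ?_
  obtain ⟨j, rfl⟩ : ∃ j, t = j + 1 := ⟨t - 1, by omega⟩
  exact mul_swap_pow_succ_apply h (Nat.lt_succ_self j)

theorem IsCycleOn.isCycleOn_arcs_mul_swap (hf : f.IsCycleOn s) (hx : x ∈ s) {t : ℕ} (ht : 0 < t)
    (hts : t < #s) : (f * swap x ((f ^ t) x)).IsCycleOn (arc f x t) ∧
      (f * swap x ((f ^ t) x)).IsCycleOn (arc f ((f ^ t) x) (#s - t)) := by
  refine ⟨hf.isCycleOn_arc_mul_swap hx ht hts, ?_⟩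
  have h := hf.isCycleOn_arc_mul_swap (hf.pow_apply_mem hx t) (t := #s - t) (by omega) (by omega)
  rwa [← mul_apply, ← pow_add, Nat.sub_add_cancel hts.le, hf.pow_card_apply hx, swap_comm] at h

theorem IsCycleOn.isCycleOn_union_mul_swap {P Q : Finset α} (hP : f.IsCycleOn P)
    (hQ : f.IsCycleOn Q) (hPQ : _root_.Disjoint P Q) (hx : x ∈ P) (hy : y ∈ Q) :
    (f * swap x y).IsCycleOn ↑(P ∪ Q) := by
  have walk {P Q : Finset α} {x y : α} (hP : f.IsCycleOn P) (hPQ : _root_.Disjoint P Q)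
      (hx : x ∈ P) (hy : y ∈ Q) :
      arc (f * swap x y) y #P = P ∧ ((f * swap x y) ^ #P) y = x := by
    have h : ∀ i, 0 < i → i < #P → (f ^ i) x ≠ x ∧ (f ^ i) x ≠ y := fun i hi hiP =>
      ⟨hP.pow_apply_ne_self hx hi hiP,
        fun e => disjoint_left.mp hPQ (e ▸ hP.pow_apply_mem hx i) hy⟩
    refine ⟨(arc_mul_swap h).trans (hP.arc_card hx), ?_⟩
    obtain ⟨j, hj⟩ : ∃ j, #P = j + 1 := ⟨#P - 1, by have := card_pos.mpr ⟨x, hx⟩; omega⟩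
    rw [hj, mul_swap_pow_succ_apply h (by omega), ← hj, hP.pow_card_apply hx]
  obtain ⟨hP', hPx⟩ := walk hP hPQ hx hy
  obtain ⟨hQ', hQy⟩ := walk hQ hPQ.symm hy hx
  rw [swap_comm] at hQ' hQy
  have hunion := arc_add (f := f * swap x y) (x := y) #P #Q
  rw [hPx, hP', hQ'] at hunion
  rw [← hunion]
  refine isCycleOn_arc (by have := card_pos.mpr ⟨x, hx⟩; omega) ?_
  rw [add_comm, pow_add, mul_apply, hPx, hQy]

theorem IsCycleOn.eq_of_swap_eq_of_arc_eq (hf : f.IsCycleOn s) (hx : x ∈ s) {c : ℕ} (hc : 0 < c)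
    (hcs : c < #s) (hswap : swap x ((f ^ c) x) = swap y ((f ^ c) y))
    (harc : arc f x c = arc f y c) : x = y := by
  rcases eq_or_eq_of_swap_eq_swap (hf.pow_apply_ne_self hx hc hcs).symm hswap
    with ⟨rfl, -⟩ | ⟨rfl, hy⟩
  · rfl
  · refine absurd ?_ (hf.self_notMem_arc hx hcs)
    rw [harc, ← hy]
    exact mem_arc.mpr ⟨c - 1, by omega, by rw [Nat.sub_add_cancel hc]⟩

end DecidableEq

/-! ### Two-transposition factorizations -/

section TwoCycles

variable [DecidableEq α] [Fintype α] {A B C : Finset α} {c : ℕ}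

def IsCycleOnAndCompl (f : Perm α) (C : Finset α) : Prop :=
  f.IsCycleOn C ∧ f.IsCycleOn ↑Cᶜ

theorem IsCycleOnAndCompl.compl (h : f.IsCycleOnAndCompl C) : f.IsCycleOnAndCompl Cᶜ :=
  ⟨h.2, by rw [compl_compl]; exact h.1⟩

theorem IsCycleOnAndCompl.inv (h : f.IsCycleOnAndCompl C) : f⁻¹.IsCycleOnAndCompl C :=
  ⟨isCycleOn_inv.mpr h.1, isCycleOn_inv.mpr h.2⟩

theorem IsCycleOnAndCompl.eq_or_eq_compl (hC : g.IsCycleOnAndCompl C) (hB : ∀ z ∈ B, g z ∈ B)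
    (hBne : B.Nonempty) (hBc : Bᶜ.Nonempty) : C = B ∨ C = Bᶜ := by
  have same (z w : α) (h : z ∈ C ↔ w ∈ C) : z ∈ B ↔ w ∈ B := by
    have hzw : g.SameCycle z w := by
      by_cases hz : z ∈ C
      · exact hC.1.2 hz (h.mp hz)
      · exact hC.2.2 (by simpa using hz) (by simpa [← h] using hz)
    exact ⟨fun hz => mem_of_sameCycle_of_mapsTo hB hz hzw,
      fun hw => mem_of_sameCycle_of_mapsTo hB hw hzw.symm⟩
  obtain ⟨x₀, hx₀⟩ := hBne
  obtain ⟨y₀, hy₀⟩ := hBc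
  rw [mem_compl] at hy₀
  by_cases h₀ : x₀ ∈ C
  · refine .inl (Finset.ext fun w => ?_)
    have := same w x₀; have := same w y₀; have := same x₀ y₀
    tauto
  · refine .inr (Finset.ext fun w => ?_)
    have := same w x₀; have := same w y₀; have := same x₀ y₀
    rw [mem_compl]
    tauto

theorem IsCycleOnAndCompl.isCycleOn_univ_mul_swap (hA : f.IsCycleOnAndCompl A) (hx : x ∈ A)
    (hy : y ∉ A) : (f * swap x y).IsCycleOn (univ : Finset α) := by
  have h := hA.1.isCycleOn_union_mul_swap hA.2 disjoint_compl_right hx (mem_compl.mpr hy)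
  rwa [union_compl] at h

theorem IsCycleOnAndCompl.exists_mem_apply_eq {D : Finset α} {H : Subgroup (Perm α)}
    (hA : f.IsCycleOnAndCompl A) (hD : g.IsCycleOn D) (hf : f ∈ H) (hg : g ∈ H) {z z' : α}
    (hz : z ∈ D) (hzA : z ∈ A) (hz' : z' ∈ D) (hz'A : z' ∉ A) (x y : α) : ∃ h ∈ H, h x = y := by
  have reach (x : α) : ∃ h ∈ H, h x = z := by
    by_cases hx : x ∈ A
    · obtain ⟨i, hi⟩ := hA.1.2 hx hzA
      exact ⟨f ^ i, zpow_mem hf i, hi⟩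
    · obtain ⟨i, hi⟩ := hA.2.2 (mem_compl.mpr hx) (mem_compl.mpr hz'A)
      obtain ⟨j, hj⟩ := hD.2 hz' hz
      exact ⟨g ^ j * f ^ i, mul_mem (zpow_mem hg j) (zpow_mem hf i), by rw [mul_apply, hi, hj]⟩
  obtain ⟨h₁, hh₁, e₁⟩ := reach x
  obtain ⟨h₂, hh₂, e₂⟩ := reach y
  exact ⟨h₂⁻¹ * h₁, mul_mem (inv_mem hh₂) hh₁, by rw [mul_apply, e₁, ← e₂, inv_eq_iff_eq]⟩

theorem IsCycleOn.compl_arc (hf : f.IsCycleOn (univ : Finset α)) {t : ℕ}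
    (ht : t ≤ Fintype.card α) : (arc f x t)ᶜ = arc f ((f ^ t) x) (Fintype.card α - t) := by
  rw [← card_univ] at ht ⊢
  exact (IsCompl.of_eq (disjoint_iff_inter_eq_empty.mp (hf.disjoint_arc (mem_univ x) ht))
    (hf.arc_union_arc (mem_univ x) ht)).compl_eq

theorem IsCycleOn.isCycleOnAndCompl_arc_mul_swap (hf : f.IsCycleOn (univ : Finset α)) {t : ℕ}
    (ht : 0 < t) (htn : t < Fintype.card α) :
    (f * swap x ((f ^ t) x)).IsCycleOnAndCompl (arc f x t) := by
  rw [IsCycleOnAndCompl, hf.compl_arc htn.le, ← card_univ]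
  rw [← card_univ] at htn
  exact hf.isCycleOn_arcs_mul_swap (mem_univ x) ht htn

open Classical in
noncomputable def twoSwapFactorizations (f : Perm α) (c : ℕ) :
    Finset (Perm α × Perm α × Finset α) :=
  {r | r.1.IsSwap ∧ r.2.1.IsSwap ∧ #r.2.2 = c ∧ (f * r.1 * r.2.1).IsCycleOnAndCompl r.2.2}

theorem mem_twoSwapFactorizations {r : Perm α × Perm α × Finset α} :
    r ∈ twoSwapFactorizations f c ↔
      r.1.IsSwap ∧ r.2.1.IsSwap ∧ #r.2.2 = c ∧ (f * r.1 * r.2.1).IsCycleOnAndCompl r.2.2 := by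
  simp [twoSwapFactorizations]

def joinCut (f : Perm α) (c : ℕ) (r : α × α × α) : Perm α × Perm α × Finset α :=
  (swap r.1 r.2.1, swap r.2.2 (((f * swap r.1 r.2.1) ^ c) r.2.2),
    arc (f * swap r.1 r.2.1) r.2.2 c)

def cutJoin (f : Perm α) (c : ℕ) (r : α × ℕ × α) : Perm α × Perm α × Finset α :=
  (swap r.1 ((f ^ c) r.1), swap ((f ^ (r.2.1 + 1)) ((f ^ c) r.1)) r.2.2, arc f r.1 c)

variable {u w : α}

theorem joinCut_mem (hA : f.IsCycleOnAndCompl A) (hx : x ∈ A) (hy : y ∉ A) (hc : 0 < c)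
    (hcn : c < Fintype.card α) (u : α) : joinCut f c (x, y, u) ∈ twoSwapFactorizations f c := by
  have hρ := hA.isCycleOn_univ_mul_swap hx hy
  have hcn' : c < #(univ : Finset α) := by rwa [card_univ]
  exact mem_twoSwapFactorizations.mpr ⟨⟨x, y, ne_of_mem_of_not_mem hx hy, rfl⟩,
    ⟨u, _, (hρ.pow_apply_ne_self (mem_univ u) hc hcn').symm, rfl⟩,
    hρ.card_arc (mem_univ u) hcn'.le, hρ.isCycleOnAndCompl_arc_mul_swap hc hcn⟩

theorem cutJoin_mem (hB : f.IsCycleOnAndCompl B) (hu : u ∈ B) {k : ℕ} (hk : k < #B - c)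
    (hw : w ∉ B) (hc : 0 < c) : cutJoin f c (u, k, w) ∈ twoSwapFactorizations f c := by
  set v := (f ^ c) u
  set p := (f ^ (k + 1)) v
  have hcB : c < #B := by omega
  obtain ⟨hP₁, hP₂⟩ := hB.1.isCycleOn_arcs_mul_swap hu hc hcB
  have hv : v ∈ B := hB.1.pow_apply_mem hu c
  have hP₁B : arc f u c ⊆ B := arc_subset (fun _ hz => hB.1.1.mapsTo hz) hu
  have hP₂B : arc f v (#B - c) ⊆ B := arc_subset (fun _ hz => hB.1.1.mapsTo hz) hv
  have hp : p ∈ arc f v (#B - c) := mem_arc.mpr ⟨k, hk, rfl⟩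
  have hdisj := hB.1.disjoint_arc hu hcB.le
  have hcompl : (arc f u c)ᶜ = arc f v (#B - c) ∪ Bᶜ := by
    ext z
    have hz : z ∈ arc f u c ∨ z ∈ arc f v (#B - c) ↔ z ∈ B := by
      rw [← mem_union, hB.1.arc_union_arc hu hcB.le]
    have := fun h : z ∈ arc f u c => Finset.disjoint_left.mp hdisj h
    rw [mem_compl, mem_union, mem_compl]
    tauto
  refine mem_twoSwapFactorizations.mpr ⟨⟨u, v, (hB.1.pow_apply_ne_self hu hc hcB).symm, rfl⟩,
    ⟨p, w, ne_of_mem_of_not_mem (hP₂B hp) hw, rfl⟩, hB.1.card_arc hu hcB.le,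
    hP₁.mul_swap (disjoint_right.mp hdisj hp) (fun h => hw (hP₁B h)), ?_⟩
  show (f * swap u v * swap p w).IsCycleOn ↑(arc f u c)ᶜ
  rw [hcompl]
  exact hP₂.isCycleOn_union_mul_swap
    (hB.2.mul_swap (fun h => mem_compl.mp h hu) (fun h => mem_compl.mp h hv))
    (disjoint_compl_right.mono_left hP₂B) hp (mem_compl.mpr hw)

theorem exists_joinCut_eq (hA : f.IsCycleOnAndCompl A) (hx : x ∈ A) (hy : y ∉ A) {τ : Perm α}
    (hτ : τ.IsSwap) (hC : (f * swap x y * τ).IsCycleOnAndCompl C) (hCc : #C = c) :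
    ∃ u, joinCut f c (x, y, u) = (swap x y, τ, C) := by
  set ρ := f * swap x y
  have hρ : ρ.IsCycleOn (univ : Finset α) := hA.isCycleOn_univ_mul_swap hx hy
  obtain ⟨p, q, hpq, rfl⟩ := hτ
  obtain ⟨t, ht, rfl⟩ := hρ.exists_pow_eq (mem_univ p) (mem_univ q)
  have ht0 : 0 < t := Nat.pos_of_ne_zero fun h => hpq (by rw [h, pow_zero, one_apply])
  rw [card_univ] at ht
  have hcompl_ne : (arc ρ p t)ᶜ.Nonempty := by
    rw [hρ.compl_arc ht.le]
    exact arc_nonempty (by omega)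
  rcases hC.eq_or_eq_compl (fun z hz => (hρ.isCycleOnAndCompl_arc_mul_swap ht0 ht).1.1.mapsTo hz)
    (arc_nonempty ht0) hcompl_ne with rfl | rfl
  · rw [hρ.card_arc (mem_univ p) (by rw [card_univ]; omega)] at hCc
    subst hCc
    exact ⟨p, rfl⟩
  · rw [hρ.compl_arc ht.le] at hCc ⊢
    rw [hρ.card_arc (mem_univ _) (by rw [card_univ]; omega)] at hCc
    subst hCc
    refine ⟨(ρ ^ t) p, ?_⟩
    have hret : (ρ ^ (Fintype.card α - t)) ((ρ ^ t) p) = p := by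
      rw [← mul_apply, ← pow_add, Nat.sub_add_cancel ht.le, ← card_univ,
        hρ.pow_card_apply (mem_univ p)]
    change (swap x y, swap ((ρ ^ t) p) ((ρ ^ (Fintype.card α - t)) ((ρ ^ t) p)),
      arc ρ ((ρ ^ t) p) (Fintype.card α - t)) = _
    rw [hret, swap_comm ((ρ ^ t) p) p]

theorem exists_cutJoin_eq_of_mem_arc (hB : f.IsCycleOnAndCompl B) (hx : x ∈ B) {t : ℕ}
    (ht : 0 < t) (htB : t < #B) {p q : α} (hp : p ∈ arc f ((f ^ t) x) (#B - t)) (hq : q ∉ B)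
    (hC : (f * swap x ((f ^ t) x) * swap p q).IsCycleOnAndCompl C) (hCc : #C = c)
    (hcBc : c < #Bᶜ) :
    ∃ k < #B - c, cutJoin f c (x, k, q) = (swap x ((f ^ t) x), swap p q, C) := by
  have hP₁B : arc f x t ⊆ B := arc_subset (fun _ hz => hB.1.1.mapsTo hz) hx
  have hσ₂ := (hB.1.isCycleOn_arcs_mul_swap hx ht htB).1.mul_swap
    (Finset.disjoint_right.mp (hB.1.disjoint_arc hx htB.le) hp) (fun h => hq (hP₁B h))
  have hBc : Bᶜ ⊆ (arc f x t)ᶜ := compl_subset_compl.mpr hP₁B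
  rcases hC.eq_or_eq_compl (fun z hz => hσ₂.1.mapsTo hz) (arc_nonempty ht)
    ((card_pos.mp (by omega)).mono hBc) with rfl | rfl
  · rw [hB.1.card_arc hx htB.le] at hCc
    subst hCc
    obtain ⟨k, hk, rfl⟩ := mem_arc.mp hp
    exact ⟨k, hk, rfl⟩
  · have := card_le_card hBc
    omega

theorem exists_cutJoin_eq_of_mem_of_not_mem (hB : f.IsCycleOnAndCompl B) (hx : x ∈ B)
    (hy : y ∈ B) (hxy : x ≠ y) {p q : α} (hp : p ∈ B) (hq : q ∉ B)
    (hC : (f * swap x y * swap p q).IsCycleOnAndCompl C) (hCc : #C = c) (hcBc : c < #Bᶜ) :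
    ∃ u ∈ B, ∃ k < #B - c, ∃ w ∈ Bᶜ, cutJoin f c (u, k, w) = (swap x y, swap p q, C) := by
  obtain ⟨t, htB, rfl⟩ := hB.1.exists_pow_eq hx hy
  have ht : 0 < t := Nat.pos_of_ne_zero fun h => hxy (by rw [h, pow_zero, one_apply])
  rw [← hB.1.arc_union_arc hx htB.le, mem_union] at hp
  rcases hp with hp | hp
  · have hret : (f ^ (#B - t)) ((f ^ t) x) = x := by
      rw [← mul_apply, ← pow_add, Nat.sub_add_cancel htB.le, hB.1.pow_card_apply hx]
    obtain ⟨k, hk, h⟩ := exists_cutJoin_eq_of_mem_arc hB hy (t := #B - t) (by omega) (by omega)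
      (by rwa [hret, Nat.sub_sub_self htB.le]) hq (by rwa [hret, swap_comm]) hCc hcBc
    exact ⟨_, hy, k, hk, q, mem_compl.mpr hq, by rw [h, hret, swap_comm]⟩
  · obtain ⟨k, hk, h⟩ := exists_cutJoin_eq_of_mem_arc hB hx ht htB hp hq hC hCc hcBc
    exact ⟨x, hx, k, hk, q, mem_compl.mpr hq, h⟩

theorem exists_cutJoin_eq (hB : f.IsCycleOnAndCompl B) (hx : x ∈ B) (hy : y ∈ B) (hxy : x ≠ y)
    {τ : Perm α} (hτ : τ.IsSwap) (hC : (f * swap x y * τ).IsCycleOnAndCompl C) (hCc : #C = c)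
    (hcB : c < #B) (hcBc : c < #Bᶜ) :
    ∃ u ∈ B, ∃ k < #B - c, ∃ w ∈ Bᶜ, cutJoin f c (u, k, w) = (swap x y, τ, C) := by
  obtain ⟨p, q, -, rfl⟩ := hτ
  by_cases hpq : p ∈ B ↔ q ∈ B
  · -- then `B` is invariant, so `C` would be `B` or `Bᶜ`
    have hinv (z : α) (hz : z ∈ B) : (f * swap x y * swap p q) z ∈ B :=
      hB.1.1.mapsTo ((swap_apply_mem_iff (iff_of_true hx hy)).mpr ((swap_apply_mem_iff hpq).mpr hz))
    rcases hC.eq_or_eq_compl hinv ⟨x, hx⟩ (card_pos.mp (by omega)) with rfl | rfl <;> omega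
  by_cases hp : p ∈ B
  · exact exists_cutJoin_eq_of_mem_of_not_mem hB hx hy hxy hp (by tauto) hC hCc hcBc
  · rw [swap_comm p q] at hC ⊢
    exact exists_cutJoin_eq_of_mem_of_not_mem hB hx hy hxy (by tauto) hp hC hCc hcBc

theorem joinCut_injOn (hA : f.IsCycleOnAndCompl A) (hc : 0 < c) (hcn : c < Fintype.card α) :
    Set.InjOn (joinCut f c) ↑(A ×ˢ Aᶜ ×ˢ (univ : Finset α)) := by
  rintro ⟨x, y, u⟩ h ⟨x', y', u'⟩ h' heq
  simp only [coe_product, Set.mem_prod, mem_coe, mem_compl] at h h'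
  simp only [joinCut, Prod.mk.injEq] at heq
  obtain ⟨hτ₁, hτ₂, hC⟩ := heq
  obtain ⟨rfl, rfl⟩ : x = x' ∧ y = y' := by
    rcases eq_or_eq_of_swap_eq_swap (ne_of_mem_of_not_mem h.1 h.2.1) hτ₁ with h | ⟨rfl, -⟩
    · exact h
    · exact absurd h.1 h'.2.1
  rw [(hA.isCycleOn_univ_mul_swap h.1 h.2.1).eq_of_swap_eq_of_arc_eq (mem_univ u) hc
    (by rwa [card_univ]) hτ₂ hC]

theorem cutJoin_injOn (hB : f.IsCycleOnAndCompl B) (hc : 0 < c) :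
    Set.InjOn (cutJoin f c) ↑(B ×ˢ range (#B - c) ×ˢ Bᶜ) := by
  rintro ⟨u, k, w⟩ h ⟨u', k', w'⟩ h' heq
  simp only [coe_product, Set.mem_prod, mem_coe, mem_range, mem_compl] at h h'
  simp only [cutJoin, Prod.mk.injEq] at heq
  obtain ⟨hτ₁, hτ₂, hC⟩ := heq
  obtain rfl := hB.1.eq_of_swap_eq_of_arc_eq h.1 hc (by omega) hτ₁ hC
  have hv : (f ^ c) u ∈ B := hB.1.pow_apply_mem h.1 c
  rcases eq_or_eq_of_swap_eq_swap (ne_of_mem_of_not_mem (hB.1.pow_apply_mem hv _) h.2.2) hτ₂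
    with ⟨e, rfl⟩ | ⟨-, e⟩
  · obtain rfl : k = k' := by
      have := hB.1.pow_injOn hv (by omega) (by omega) e
      omega
    rfl
  · exact absurd (e ▸ hB.1.pow_apply_mem hv _) h.2.2

theorem cutJoin_fst_apply_mem_iff (hB : f.IsCycleOnAndCompl B) (hu : u ∈ B) {k : ℕ} (z : α) :
    (cutJoin f c (u, k, w)).1 z ∈ B ↔ z ∈ B :=
  swap_apply_mem_iff (iff_of_true hu (hB.1.pow_apply_mem hu c))

theorem twoSwapFactorizations_eq (hA : f.IsCycleOnAndCompl A) (hc : 0 < c) (hca : c < #A)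
    (hcb : c < #Aᶜ) :
    twoSwapFactorizations f c = (A ×ˢ Aᶜ ×ˢ univ).image (joinCut f c) ∪
      ((A ×ˢ range (#A - c) ×ˢ Aᶜ).image (cutJoin f c) ∪
        (Aᶜ ×ˢ range (#Aᶜ - c) ×ˢ Aᶜᶜ).image (cutJoin f c)) := by
  apply Subset.antisymm
  · rintro ⟨τ₁, τ₂, C⟩ hr
    obtain ⟨⟨x, y, hxy, rfl⟩, hτ₂, hCc, hC⟩ := mem_twoSwapFactorizations.mp hr
    simp only [mem_union, mem_image, mem_product, mem_univ, mem_range, and_true, Prod.exists]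
    by_cases hx : x ∈ A <;> by_cases hy : y ∈ A
    · obtain ⟨u, hu, k, hk, w, hw, h⟩ := exists_cutJoin_eq hA hx hy hxy hτ₂ hC hCc hca hcb
      exact .inr (.inl ⟨u, k, w, ⟨hu, hk, hw⟩, h⟩)
    · obtain ⟨u, h⟩ := exists_joinCut_eq hA hx hy hτ₂ hC hCc
      exact .inl ⟨x, y, u, ⟨hx, mem_compl.mpr hy⟩, h⟩
    · rw [swap_comm] at hC ⊢
      obtain ⟨u, h⟩ := exists_joinCut_eq hA hy hx hτ₂ hC hCc
      exact .inl ⟨y, x, u, ⟨hy, mem_compl.mpr hx⟩, h⟩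
    · obtain ⟨u, hu, k, hk, w, hw, h⟩ := exists_cutJoin_eq hA.compl (mem_compl.mpr hx)
        (mem_compl.mpr hy) hxy hτ₂ hC hCc hcb (by rwa [compl_compl])
      exact .inr (.inr ⟨u, k, w, ⟨hu, hk, hw⟩, h⟩)
  · intro r hr
    simp only [mem_union, mem_image, mem_product, mem_range, mem_univ, and_true,
      Prod.exists] at hr
    rcases hr with ⟨x, y, u, ⟨hx, hy⟩, rfl⟩ | ⟨u, k, w, ⟨hu, hk, hw⟩, rfl⟩ |
      ⟨u, k, w, ⟨hu, hk, hw⟩, rfl⟩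
    · exact joinCut_mem hA hx (mem_compl.mp hy) hc
        (by have := card_add_card_compl A; omega) u
    · exact cutJoin_mem hA hu hk (mem_compl.mp hw) hc
    · exact cutJoin_mem hA.compl hu hk (mem_compl.mp hw) hc

theorem card_twoSwapFactorizations (hA : f.IsCycleOnAndCompl A) (hc : 0 < c) (hca : c < #A)
    (hcb : c < #Aᶜ) :
    #(twoSwapFactorizations f c) = #A * #Aᶜ * (2 * (Fintype.card α - c)) := by
  have hn : #A + #Aᶜ = Fintype.card α := card_add_card_compl A
  have hJK : _root_.Disjoint ((A ×ˢ Aᶜ ×ˢ univ).image (joinCut f c))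
      ((A ×ˢ range (#A - c) ×ˢ Aᶜ).image (cutJoin f c) ∪
        (Aᶜ ×ˢ range (#Aᶜ - c) ×ˢ Aᶜᶜ).image (cutJoin f c)) := by
    refine Finset.disjoint_left.mpr fun r hJ hK => ?_
    obtain ⟨⟨x, y, u⟩, hxyu, rfl⟩ := mem_image.mp hJ
    simp only [mem_product, mem_compl] at hxyu
    have hmoves : ¬ ∀ z, (joinCut f c (x, y, u)).1 z ∈ A ↔ z ∈ A := fun h =>
      hxyu.2.1 (by simpa [joinCut] using (h x).mpr hxyu.1)
    rcases mem_union.mp hK with hK | hK <;> obtain ⟨⟨u', k, w⟩, hu', he⟩ := mem_image.mp hK <;>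
      simp only [mem_product] at hu' <;> rw [← he] at hmoves
    · exact hmoves (cutJoin_fst_apply_mem_iff hA hu'.1)
    · exact hmoves fun z => by simpa using (cutJoin_fst_apply_mem_iff hA.compl hu'.1 z).not
  have hK : _root_.Disjoint ((A ×ˢ range (#A - c) ×ˢ Aᶜ).image (cutJoin f c))
      ((Aᶜ ×ˢ range (#Aᶜ - c) ×ˢ Aᶜᶜ).image (cutJoin f c)) := by
    refine Finset.disjoint_left.mpr fun r h₁ h₂ => ?_
    obtain ⟨⟨u, k, w⟩, hu, rfl⟩ := mem_image.mp h₁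
    obtain ⟨⟨u', k', w'⟩, hu', he⟩ := mem_image.mp h₂
    simp only [mem_product] at hu hu'
    obtain ⟨z, hz⟩ := arc_nonempty (f := f) (x := u) hc
    have hzA : z ∈ A := arc_subset (fun _ hz => hA.1.1.mapsTo hz) hu.1 hz
    have hzAc : z ∈ Aᶜ := arc_subset (fun _ hz => hA.2.1.mapsTo hz) hu'.1
      (by rw [show arc f u' c = arc f u c from congrArg (·.2.2) he]; exact hz)
    exact mem_compl.mp hzAc hzA
  rw [twoSwapFactorizations_eq hA hc hca hcb, card_union_of_disjoint hJK,
    card_union_of_disjoint hK, card_image_of_injOn (joinCut_injOn hA hc (by omega)),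
    card_image_of_injOn (cutJoin_injOn hA hc), card_image_of_injOn (cutJoin_injOn hA.compl hc)]
  simp only [card_product, card_range, card_univ, compl_compl]
  rw [← hn]
  zify [hca.le, hcb.le, (by omega : c ≤ #A + #Aᶜ)]
  ring

end TwoCycles

/-! ### Counting labelled permutations of type `(a, b)` -/

theorem sumCongr_pow {β γ : Type*} (σ : Perm β) (τ : Perm γ) (k : ℕ) :
    Perm.sumCongr σ τ ^ k = Perm.sumCongr (σ ^ k) (τ ^ k) := by
  induction k with
  | zero => simp
  | succ k ih => rw [pow_succ, ih, sumCongr_mul, ← pow_succ, ← pow_succ]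

theorem permCongr_pow_apply {β : Type*} (e : β ≃ α) (τ : Perm β) (k : ℕ) (z : β) :
    ((e.permCongr τ) ^ k) (e z) = e ((τ ^ k) z) := by
  rw [show e.permCongr τ = permCongrHom e τ from rfl, ← map_pow]
  simp [permCongrHom]

theorem IsCycleOn.pow_finRotate_apply {a : ℕ} [NeZero a] (hf : f.IsCycleOn s) (hx : x ∈ s)
    (hs : #s = a) (i : Fin a) : (f ^ (finRotate a i : ℕ)) x = f ((f ^ (i : ℕ)) x) := by
  rw [← mul_apply, ← pow_succ', hf.pow_apply_eq_pow_apply hx, hs, finRotate_apply, Fin.val_add,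
    Fin.val_one']
  exact (Nat.mod_modEq _ _).trans (Nat.ModEq.add_left _ (Nat.mod_modEq 1 _))

section DecidableEq

variable [DecidableEq α]

theorem isCycleOn_image_of_apply_eq {a : ℕ} [NeZero a] {e : Fin a → α}
    (he : ∀ i, f (e i) = e (finRotate a i)) : f.IsCycleOn (univ.image e) := by
  have hpow (n : ℕ) (i : Fin a) : (f ^ n) (e i) = e ((finRotate a ^ n) i) := by
    induction n generalizing i with
    | zero => rfl
    | succ n ih => rw [pow_succ, mul_apply, he, ih, pow_succ, mul_apply]
  have hzero (i : Fin a) : f.SameCycle (e 0) (e i) :=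
    ⟨i, by rw [zpow_natCast, hpow, coe_pow, ← finCycle_eq_finRotate_iterate, finCycle_apply,
      zero_add]⟩
  refine isCycleOn_of_forall_sameCycle (fun z hz => ?_) fun z hz w hw => ?_
  · obtain ⟨i, -, rfl⟩ := mem_image.mp hz
    exact he i ▸ mem_image_of_mem e (mem_univ _)
  · obtain ⟨i, -, rfl⟩ := mem_image.mp hz
    obtain ⟨j, -, rfl⟩ := mem_image.mp hw
    exact (hzero i).symm.trans (hzero j)

def enumCycles {a b : ℕ} (σ : Perm α) (p q : α) : Fin a ⊕ Fin b → α :=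
  Sum.elim (fun i => (σ ^ (i : ℕ)) p) (fun j => (σ ^ (j : ℕ)) q)

def transportTwoCycles {a b : ℕ} [NeZero a] [NeZero b] (e : Fin a ⊕ Fin b ≃ α) :
    Σ _ : Perm α × Finset α, α × α :=
  ⟨(e.permCongr (Perm.sumCongr (finRotate a) (finRotate b)), univ.image (e ∘ Sum.inl)),
    (e (.inl 0), e (.inr 0))⟩

theorem enumCycles_transportTwoCycles {a b : ℕ} [NeZero a] [NeZero b] (e : Fin a ⊕ Fin b ≃ α) :
    enumCycles (transportTwoCycles e).1.1 (transportTwoCycles e).2.1 (transportTwoCycles e).2.2 =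
      e := by
  funext z
  rcases z with i | j <;>
    simp [transportTwoCycles, enumCycles, permCongr_pow_apply, sumCongr_pow,
      coe_pow, ← finCycle_eq_finRotate_iterate]

theorem transportTwoCycles_injective {a b : ℕ} [NeZero a] [NeZero b] :
    Function.Injective (transportTwoCycles (α := α) (a := a) (b := b)) := fun e e' h =>
  DFunLike.coe_injective <| by
    rw [← enumCycles_transportTwoCycles e, ← enumCycles_transportTwoCycles e', h]

end DecidableEq

section LabelledCount

variable [DecidableEq α] [Fintype α] {A : Finset α} {a b : ℕ} {σ : Perm α} {p q : α}

open Classical in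
noncomputable def labelledTwoCycles (α : Type*) [DecidableEq α] [Fintype α] (a : ℕ) :
    Finset (Perm α × Finset α) :=
  {l | #l.2 = a ∧ l.1.IsCycleOnAndCompl l.2}

theorem mem_labelledTwoCycles {l : Perm α × Finset α} :
    l ∈ labelledTwoCycles α a ↔ #l.2 = a ∧ l.1.IsCycleOnAndCompl l.2 := by
  simp [labelledTwoCycles]

noncomputable def markedLabelledTwoCycles (α : Type*) [DecidableEq α] [Fintype α] (a : ℕ) :
    Finset (Σ _ : Perm α × Finset α, α × α) :=
  (labelledTwoCycles α a).sigma fun l => l.2 ×ˢ l.2ᶜ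

theorem card_compl_of_card_eq_add (hn : Fintype.card α = a + b) (hA : #A = a) : #Aᶜ = b := by
  rw [Finset.card_compl, hn, hA, Nat.add_sub_cancel_left]

theorem card_markedLabelledTwoCycles (hn : Fintype.card α = a + b) :
    #(markedLabelledTwoCycles α a) = #(labelledTwoCycles α a) * (a * b) := by
  rw [markedLabelledTwoCycles, card_sigma, sum_congr rfl fun l hl => ?_, sum_const, smul_eq_mul]
  obtain ⟨hA, -⟩ := mem_labelledTwoCycles.mp hl
  rw [card_product, hA, card_compl_of_card_eq_add hn hA]

theorem enumCycles_bijective (hσ : σ.IsCycleOnAndCompl A) (hn : Fintype.card α = a + b)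
    (hA : #A = a) (hp : p ∈ A) (hq : q ∉ A) :
    (enumCycles σ p q : Fin a ⊕ Fin b → α).Bijective := by
  refine (Fintype.bijective_iff_injective_and_card _).mpr ⟨?_, by simp [hn]⟩
  have hAc := card_compl_of_card_eq_add hn hA
  have hqA (j : ℕ) : (σ ^ j) q ∉ A := mem_compl.mp (hσ.2.pow_apply_mem (mem_compl.mpr hq) j)
  rintro (i | i) (j | j) h <;> simp only [enumCycles, Sum.elim_inl, Sum.elim_inr] at h
  · exact congrArg Sum.inl (Fin.ext (hσ.1.pow_injOn hp (hA ▸ i.2) (hA ▸ j.2) h))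
  · exact absurd (h ▸ hσ.1.pow_apply_mem hp i) (hqA j)
  · exact absurd (h ▸ hσ.1.pow_apply_mem hp j) (hqA i)
  · exact congrArg Sum.inr (Fin.ext (hσ.2.pow_injOn (mem_compl.mpr hq) (hAc ▸ i.2) (hAc ▸ j.2) h))

theorem enumCycles_sumCongr_apply [NeZero a] [NeZero b] (hσ : σ.IsCycleOnAndCompl A)
    (hA : #A = a) (hAc : #Aᶜ = b) (hp : p ∈ A) (hq : q ∉ A) (z : Fin a ⊕ Fin b) :
    enumCycles σ p q (Perm.sumCongr (finRotate a) (finRotate b) z) = σ (enumCycles σ p q z) := by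
  rcases z with i | j
  · exact hσ.1.pow_finRotate_apply hp hA i
  · exact hσ.2.pow_finRotate_apply (mem_compl.mpr hq) hAc j

theorem transportTwoCycles_mem [NeZero a] [NeZero b] (e : Fin a ⊕ Fin b ≃ α) :
    transportTwoCycles e ∈ markedLabelledTwoCycles α a := by
  have hcyc {k : ℕ} [NeZero k] {i : Fin k → Fin a ⊕ Fin b}
      (hi : ∀ j, Perm.sumCongr (finRotate a) (finRotate b) (i j) = i (finRotate k j)) :
      (transportTwoCycles e).1.1.IsCycleOn (univ.image (e ∘ i)) :=
    isCycleOn_image_of_apply_eq fun j => by simp [transportTwoCycles, permCongr_apply, hi]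
  have hcompl : (univ.image (e ∘ Sum.inl))ᶜ = univ.image (e ∘ Sum.inr) := by
    ext z
    obtain ⟨w, rfl⟩ := e.surjective z
    rcases w with i | j <;> simp
  refine mem_sigma.mpr ⟨mem_labelledTwoCycles.mpr ⟨?_, hcyc fun _ => rfl, ?_⟩, ?_⟩
  · rw [transportTwoCycles, card_image_of_injective _ (e.injective.comp Sum.inl_injective),
      card_univ, Fintype.card_fin]
  · rw [transportTwoCycles, hcompl]
    exact hcyc fun _ => rfl
  · simp [transportTwoCycles, mem_product, hcompl]

theorem exists_transportTwoCycles_eq [NeZero a] [NeZero b] (hn : Fintype.card α = a + b)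
    {m : Σ _ : Perm α × Finset α, α × α} (hm : m ∈ markedLabelledTwoCycles α a) :
    ∃ e : Fin a ⊕ Fin b ≃ α, transportTwoCycles e = m := by
  obtain ⟨⟨σ, A⟩, p, q⟩ := m
  obtain ⟨hl, hpq⟩ := mem_sigma.mp hm
  obtain ⟨hA, hσ⟩ := mem_labelledTwoCycles.mp hl
  obtain ⟨hp, hq⟩ := mem_product.mp hpq
  dsimp only at hA hσ hp hq
  rw [mem_compl] at hq
  set e := Equiv.ofBijective _ (enumCycles_bijective hσ hn hA hp hq)
  have he (z : Fin a ⊕ Fin b) : e z = enumCycles σ p q z := rfl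
  have hσe : e.permCongr (Perm.sumCongr (finRotate a) (finRotate b)) = σ := by
    ext x
    obtain ⟨z, rfl⟩ := e.surjective x
    rw [permCongr_apply, symm_apply_apply, he, he,
      enumCycles_sumCongr_apply hσ hA (card_compl_of_card_eq_add hn hA) hp hq]
  have hAe : univ.image (e ∘ Sum.inl) = A := by
    refine eq_of_subset_of_card_le (fun z hz => ?_) ?_
    · obtain ⟨i, -, rfl⟩ := mem_image.mp hz
      exact hσ.1.pow_apply_mem hp i
    · rw [card_image_of_injective _ (e.injective.comp Sum.inl_injective), card_univ,
        Fintype.card_fin, hA]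
  refine ⟨e, ?_⟩
  simp only [transportTwoCycles, hσe, hAe, he, enumCycles, Sum.elim_inl, Sum.elim_inr,
    Fin.val_zero, pow_zero, one_apply]

theorem card_labelledTwoCycles_mul (ha : 0 < a) (hb : 0 < b) (hn : Fintype.card α = a + b) :
    #(labelledTwoCycles α a) * (a * b) = (a + b)! := by
  have := NeZero.of_pos ha
  have := NeZero.of_pos hb
  have hequiv : #(univ : Finset (Fin a ⊕ Fin b ≃ α)) = (a + b)! := by
    rw [card_univ, Fintype.card_equiv (Fintype.equivOfCardEq (by simp [hn])), Fintype.card_sum,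
      Fintype.card_fin, Fintype.card_fin]
  rw [← card_markedLabelledTwoCycles hn, ← hequiv]
  exact (card_bij (fun e _ => transportTwoCycles e) (fun e _ => transportTwoCycles_mem e)
    (fun _ _ _ _ h => transportTwoCycles_injective h)
    (fun _ hm => (exists_transportTwoCycles_eq hn hm).imp fun e h => ⟨mem_univ e, h⟩)).symm

end LabelledCount

end Equiv.Perm

open Equiv.Perm

theorem isLabelledTwoCycle_iff {n a : ℕ} {σ : Perm (Fin n)} {A : Finset (Fin n)} :
    IsLabelledTwoCycle n a σ A ↔ #A = a ∧ σ.IsCycleOnAndCompl A := by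
  refine ⟨fun ⟨hA, hmaps, h₁, h₂⟩ => ⟨hA, isCycleOn_of_forall_sameCycle hmaps h₁,
    isCycleOn_of_forall_sameCycle (fun z hz => ?_) h₂⟩,
    fun ⟨hA, h₁, h₂⟩ => ⟨hA, fun _ hz => h₁.1.mapsTo hz, fun _ hx _ hy => h₁.2 hx hy,
      fun _ hx _ hy => h₂.2 hx hy⟩⟩
  rw [mem_compl] at hz ⊢
  exact fun h => hz (mem_of_sameCycle_of_mapsTo hmaps h ⟨-1, by simp⟩)

theorem hurwitzTuplesTwoPart_eq {a b c d : ℕ} (hca : c < a) (hcb : c < b) :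
    HurwitzTuplesTwoPart a b c d = ((labelledTwoCycles (Fin (a + b)) a).sigma
      fun l => twoSwapFactorizations l.1⁻¹ c).image fun s =>
        (s.1, s.2.1, s.2.2.1, (s.1.1⁻¹ * s.2.1 * s.2.2.1, s.2.2.2)) := by
  ext ⟨⟨σ₁, A⟩, τ₁, τ₂, σ₂, C⟩
  simp only [HurwitzTuplesTwoPart, Set.mem_ofPred_eq, coe_image, Set.mem_image, mem_coe,
    mem_sigma, Sigma.exists, mem_labelledTwoCycles, mem_twoSwapFactorizations, Prod.mk.injEq,
    isLabelledTwoCycle_iff, Prod.exists]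
  constructor
  · rintro ⟨⟨hA, hσ₁⟩, ⟨hC, hσ₂⟩, hτ₁, hτ₂, hprod, -⟩
    rw [mul_mul_mul_eq_one_iff_of_isSwap hτ₁ hτ₂] at hprod
    subst hprod
    exact ⟨σ₁, A, τ₁, τ₂, C, ⟨⟨hA, hσ₁⟩, hτ₁, hτ₂, hC, hσ₂⟩, ⟨rfl, rfl⟩, rfl, rfl, rfl, rfl⟩
  · rintro ⟨σ₁, A, τ₁, τ₂, C, ⟨⟨hA, hσ₁⟩, hτ₁, hτ₂, hC, hσ₂⟩, ⟨rfl, rfl⟩, rfl, rfl, rfl, rfl⟩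
    refine ⟨⟨hA, hσ₁⟩, ⟨hC, hσ₂⟩, hτ₁, hτ₂, (mul_mul_mul_eq_one_iff_of_isSwap hτ₁ hτ₂).mpr rfl, ?_⟩
    have hAc : #Aᶜ = b := card_compl_of_card_eq_add (Fintype.card_fin _) hA
    obtain ⟨z, hzA, hzC⟩ := exists_mem_notMem_of_card_lt_card (s := C) (t := A) (by omega)
    obtain ⟨z', hz'A, hz'C⟩ := exists_mem_notMem_of_card_lt_card (s := C) (t := Aᶜ) (by omega)
    exact hσ₁.exists_mem_apply_eq hσ₂.2 (Subgroup.subset_closure (by simp))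
      (Subgroup.subset_closure (by simp)) (mem_compl.mpr hzC) hzA (mem_compl.mpr hz'C)
      (mem_compl.mp hz'A)

theorem card_hurwitzTuplesTwoPart {a b c d : ℕ} (hc : 0 < c) (hsum : a + b = c + d)
    (hca : c < a) (hcb : c < b) :
    Nat.card (HurwitzTuplesTwoPart a b c d) =
      #(labelledTwoCycles (Fin (a + b)) a) * (a * b) * (2 * d) := by
  have hfactor (l : Perm (Fin (a + b)) × Finset (Fin (a + b)))
      (hl : l ∈ labelledTwoCycles (Fin (a + b)) a) :
      #(twoSwapFactorizations l.1⁻¹ c) = a * b * (2 * d) := by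
    obtain ⟨hA, hσ⟩ := mem_labelledTwoCycles.mp hl
    have hAc : #l.2ᶜ = b := card_compl_of_card_eq_add (Fintype.card_fin _) hA
    rw [card_twoSwapFactorizations hσ.inv hc (by omega) (by omega), hA, hAc, Fintype.card_fin,
      show a + b - c = d by omega]
  rw [hurwitzTuplesTwoPart_eq hca hcb, Nat.card_coe_set_eq, Set.ncard_coe_finset,
    card_image_of_injective _ ?_, card_sigma, sum_congr rfl hfactor, sum_const, smul_eq_mul]
  · ring
  · rintro ⟨l, τ₁, τ₂, C⟩ ⟨l', τ₁', τ₂', C'⟩ h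
    simp only [Prod.mk.injEq] at h
    obtain ⟨rfl, rfl, rfl, -, rfl⟩ := h
    rfl

theorem double_hurwitz_two_part_general (a b c d : ℕ)
    (hc : 0 < c) (hsum : a + b = c + d) (hca : c < a) (hcb : c < b) :
    (Nat.card (HurwitzTuplesTwoPart a b c d) : ℚ) / Nat.factorial (a + b) = 2 * d := by
  rw [card_hurwitzTuplesTwoPart hc hsum hca hcb,
    card_labelledTwoCycles_mul (by omega) (by omega) (Fintype.card_fin _)]
  push_cast
  field_simp

/-- in the chamber `c < a, c < b` (with `a + b = c + d`), the
genus-0 two-part double Hurwitz number is `H_0((a,b),(c,d)) = 2d`. -/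
theorem double_hurwitz_two_part (a b c d : ℕ) (ha : 0 < a) (hb : 0 < b)
    (hc : 0 < c) (hd : 0 < d) (hsum : a + b = c + d) (hca : c < a) (hcb : c < b) :
    (Nat.card (HurwitzTuplesTwoPart a b c d) : ℚ) / Nat.factorial (a + b) = 2 * d :=
  double_hurwitz_two_part_general a b c d hc hsum hca hcb
end

section
/- Permutation cut-and-join lemma (cut case): let σ ∈ S_d and τ = (i j) a transposition with i and j in the same cycle of σ, of length p + q where q is the least positive integer with σ^q(i) = j. Then τσ has the same cycles as σ except that this cycle is split into two cycles of lengths q and p (one containing i, one containing j), with q + p equal to the original cycle length. -/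
open Equiv
open scoped Classical

private lemma pow_mul_fix {α : Type*} (π : Perm α) (a : α) (q : ℕ)
    (hqa : (π ^ q) a = a) : ∀ t : ℕ, ((π ^ q) ^ t) a = a := by
  intro t
  induction t with
  | zero => simp
  | succ t ih => rw [pow_succ, Equiv.Perm.mul_apply, hqa, ih]

private lemma pow_mod_orbit {α : Type*} (π : Perm α) (a : α) (q : ℕ) (hq : 0 < q)
    (hqa : (π ^ q) a = a) (m : ℕ) : (π ^ m) a = (π ^ (m % q)) a := by
  conv_lhs => rw [← Nat.div_add_mod m q]
  rw [add_comm, pow_add, Equiv.Perm.mul_apply, pow_mul, pow_mul_fix π a q hqa]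

private lemma orbit_eq {α : Type*} [Fintype α] [DecidableEq α] (π : Perm α) (a : α)
    (q : ℕ) (hq : 0 < q) (hqa : (π ^ q) a = a) :
    (Finset.univ.filter (π.SameCycle a)) = (Finset.range q).image (fun k => (π ^ k) a) := by
  ext x
  simp only [Finset.mem_filter, Finset.mem_univ, true_and, Finset.mem_image, Finset.mem_range]
  constructor
  · intro h
    obtain ⟨m, _, hm⟩ := h.exists_pow_eq'
    exact ⟨m % q, Nat.mod_lt _ hq, by rw [← pow_mod_orbit π a q hq hqa m, hm]⟩
  · rintro ⟨k, _, rfl⟩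
    exact ⟨(k : ℤ), by simp [zpow_natCast]⟩

/-- cut-and-join, cut case: if `i` and `j` lie in the same
cycle of `σ`, of length `p + q` where `q` is the least positive integer with
`σ^q i = j`, then `(i j) · σ` has the same cycles as `σ` except that this
cycle is split into two cycles of lengths `q` (containing `i`) and `p`
(containing `j`). -/
theorem cut_and_join_cut {n : ℕ} (σ : Perm (Fin n)) (i j : Fin n) (hij : i ≠ j)
    (p q : ℕ) (hq0 : 0 < q) (hqj : (σ ^ q) i = j)
    (hmin : ∀ r, 0 < r → r < q → (σ ^ r) i ≠ j)
    (hsize : (Finset.univ.filter (σ.SameCycle i)).card = p + q) :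
    (Finset.univ.filter ((Equiv.swap i j * σ).SameCycle i)).card = q ∧
    (Finset.univ.filter ((Equiv.swap i j * σ).SameCycle j)).card = p ∧
    ¬ (Equiv.swap i j * σ).SameCycle i j ∧
    (∀ x, ¬ σ.SameCycle i x →
      ∀ y, ((Equiv.swap i j * σ).SameCycle x y ↔ σ.SameCycle x y)) := by
  set π := Equiv.swap i j * σ with hπ
  -- i is moved by σ
  have hi : σ i ≠ i := by
    intro h
    exact hij (hqj ▸ Equiv.Perm.pow_apply_eq_self_of_apply_eq_self h q).symm
  have hisupp : i ∈ σ.support := Equiv.Perm.mem_support.2 hi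
  -- the support of the cycle of i
  have sset : (σ.cycleOf i).support = Finset.univ.filter (σ.SameCycle i) := by
    ext x
    rw [Equiv.Perm.mem_support_cycleOf_iff]
    simp [Finset.mem_filter, hisupp]
  have himem : i ∈ (σ.cycleOf i).support :=
    Equiv.Perm.mem_support_cycleOf_iff.2 ⟨Equiv.Perm.SameCycle.refl σ i, hisupp⟩
  have hN : ((σ.cycleOf i).support).card = p + q := by rw [sset, hsize]
  have hco := σ.isCycleOn_support_cycleOf i
  have hpow : ∀ m : ℕ, (σ ^ m) i = i ↔ (p + q) ∣ m := by
    intro m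
    have := hco.pow_apply_eq himem (n := m)
    rwa [hN] at this
  have hpoweq : ∀ k l : ℕ, k < p + q → l < p + q → (σ ^ k) i = (σ ^ l) i → k = l := by
    intro k l hk hl h
    have := (hco.pow_apply_eq_pow_apply himem (m := k) (n := l)).1 h
    rw [hN] at this
    unfold Nat.ModEq at this
    rwa [Nat.mod_eq_of_lt hk, Nat.mod_eq_of_lt hl] at this
  have hp0 : 0 < p := by
    rcases Nat.eq_zero_or_pos p with h | h
    · subst h
      have : (σ ^ q) i = i := (hpow q).2 (by simp)
      exact absurd (this ▸ hqj) hij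
    · exact h
  have hne : ∀ m, 0 < m → m < p + q → (σ ^ m) i ≠ i := by
    intro m hm1 hm2 h
    have := Nat.le_of_dvd hm1 ((hpow m).1 h)
    omega
  have hqlt : q < p + q := by omega
  -- powers of π at i agree with σ below q
  have hA : ∀ k, k < q → (π ^ k) i = (σ ^ k) i := by
    intro k hk
    induction k with
    | zero => simp
    | succ k ih =>
      have hk' : k < q := by omega
      rw [pow_succ', Equiv.Perm.mul_apply, ih hk', hπ, Equiv.Perm.mul_apply,
        ← Equiv.Perm.mul_apply σ, ← pow_succ']
      exact Equiv.swap_apply_of_ne_of_ne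
        (hne (k + 1) (by omega) (by omega)) (hmin (k + 1) (by omega) hk)
  have hAq : (π ^ q) i = i := by
    obtain ⟨t, rfl⟩ : ∃ t, q = t + 1 := ⟨q - 1, by omega⟩
    rw [pow_succ', Equiv.Perm.mul_apply, hA t (by omega), hπ, Equiv.Perm.mul_apply,
      ← Equiv.Perm.mul_apply σ, ← pow_succ', hqj]
    exact Equiv.swap_apply_right i j
  -- powers of π at j agree with shifted σ-powers of i below p
  have hB : ∀ k, k < p → (π ^ k) j = (σ ^ (q + k)) i := by
    intro k hk
    induction k with
    | zero => simp [hqj]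
    | succ k ih =>
      have hk' : k < p := by omega
      rw [pow_succ', Equiv.Perm.mul_apply, ih hk', hπ, Equiv.Perm.mul_apply,
        ← Equiv.Perm.mul_apply σ, ← pow_succ']
      have h1 : (σ ^ (q + k + 1)) i ≠ i := hne (q + k + 1) (by omega) (by omega)
      have h2 : (σ ^ (q + k + 1)) i ≠ j := by
        intro h
        have : (σ ^ (q + k + 1)) i = (σ ^ q) i := by rw [h, hqj]
        have := hpoweq (q + k + 1) q (by omega) hqlt this
        omega
      rw [Equiv.swap_apply_of_ne_of_ne h1 h2, Nat.add_assoc]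
  have hBp : (π ^ p) j = j := by
    obtain ⟨t, rfl⟩ : ∃ t, p = t + 1 := ⟨p - 1, by omega⟩
    rw [pow_succ', Equiv.Perm.mul_apply, hB t (by omega), hπ, Equiv.Perm.mul_apply,
      ← Equiv.Perm.mul_apply σ, ← pow_succ']
    have : (σ ^ (q + t + 1)) i = i := (hpow _).2 (by exact ⟨1, by omega⟩)
    rw [this]
    exact Equiv.swap_apply_left i j
  -- orbit of i under π
  have horb_i : (Finset.univ.filter (π.SameCycle i)) =
      (Finset.range q).image (fun k => (π ^ k) i) := orbit_eq π i q hq0 hAq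
  have hcard_i : (Finset.univ.filter (π.SameCycle i)).card = q := by
    rw [horb_i, Finset.card_image_of_injOn, Finset.card_range]
    intro k hk l hl h
    simp only [Finset.mem_coe, Finset.mem_range] at hk hl
    have h' : (π ^ k) i = (π ^ l) i := h
    rw [hA k hk, hA l hl] at h'
    exact hpoweq k l (by omega) (by omega) h'
  -- orbit of j under π
  have horb_j : (Finset.univ.filter (π.SameCycle j)) =
      (Finset.range p).image (fun k => (π ^ k) j) := orbit_eq π j p hp0 hBp
  have hcard_j : (Finset.univ.filter (π.SameCycle j)).card = p := by
    rw [horb_j, Finset.card_image_of_injOn, Finset.card_range]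
    intro k hk l hl h
    simp only [Finset.mem_coe, Finset.mem_range] at hk hl
    have h' : (π ^ k) j = (π ^ l) j := h
    rw [hB k hk, hB l hl] at h'
    have := hpoweq (q + k) (q + l) (by omega) (by omega) h'
    omega
  -- i and j are not in the same π-cycle
  have hnotsame : ¬ π.SameCycle i j := by
    intro h
    have : j ∈ Finset.univ.filter (π.SameCycle i) := by
      simp only [Finset.mem_filter, Finset.mem_univ, true_and]; exact h
    rw [horb_i] at this
    simp only [Finset.mem_image, Finset.mem_range] at this
    obtain ⟨k, hk, hkj⟩ := this
    rw [hA k hk] at hkj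
    rcases Nat.eq_zero_or_pos k with rfl | hk0
    · simp at hkj; exact hij hkj
    · exact hmin k hk0 hk hkj
  refine ⟨hcard_i, hcard_j, hnotsame, ?_⟩
  -- outside the cycle of i, π and σ agree
  have hstep : ∀ z, ¬ σ.SameCycle i z → π z = σ z ∧ ¬ σ.SameCycle i (σ z) := by
    intro z hz
    have hzi : σ z ≠ i := by
      intro h
      exact hz ((Equiv.Perm.SameCycle.symm ⟨1, by simpa using h⟩))
    have hzj : σ z ≠ j := by
      intro h
      have h1 : σ.SameCycle i j := ⟨(q : ℤ), by simp [zpow_natCast, hqj]⟩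
      have h2 : σ.SameCycle z j := ⟨1, by simpa using h⟩
      exact hz (h1.trans h2.symm)
    constructor
    · rw [hπ, Equiv.Perm.mul_apply]
      exact Equiv.swap_apply_of_ne_of_ne hzi hzj
    · intro h
      have h2 : σ.SameCycle z (σ z) := ⟨1, by simp⟩
      exact hz (h.trans h2.symm)
  have hiter : ∀ (m : ℕ) (z : Fin n), ¬ σ.SameCycle i z →
      (π ^ m) z = (σ ^ m) z ∧ ¬ σ.SameCycle i ((σ ^ m) z) := by
    intro m
    induction m with
    | zero => intro z hz; simpa using hz
    | succ m ih =>
      intro z hz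
      obtain ⟨ih1, ih2⟩ := ih z hz
      obtain ⟨s1, s2⟩ := hstep _ ih2
      constructor
      · rw [pow_succ', Equiv.Perm.mul_apply, ih1, s1, ← Equiv.Perm.mul_apply, ← pow_succ']
      · rw [pow_succ', Equiv.Perm.mul_apply]
        exact s2
  intro x hx y
  constructor
  · intro h
    obtain ⟨m, _, hm⟩ := h.exists_pow_eq'
    rw [(hiter m x hx).1] at hm
    exact ⟨(m : ℤ), by simpa [zpow_natCast] using hm⟩
  · intro h
    obtain ⟨m, _, hm⟩ := h.exists_pow_eq'
    rw [← (hiter m x hx).1] at hm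
    exact ⟨(m : ℤ), by simpa [zpow_natCast] using hm⟩
end
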